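/- arXiv:2511.05098 — 3 statements merged into one kernel-verified Lean document; each statement's English description precedes it below -/
import Mathlib

section
/- Maximum principle for the swirl (Lemma 2.5): For any regular axially symmetric solution v of the Navier–Stokes problem in the cylinder Ω, the swirl u = r v_φ satisfies |u(t)|_{∞,Ω} ≤ |f₀|_{∞,1,Ω^t} + |u(0)|_{∞,Ω} ≡ D₂ for every t > 0, where f₀ = r f_φ. -/
/-!
Common setup: axially symmetric functions on the finite cylinder
`Ω = {x ∈ ℝ³ : x₁² + x₂² < R², |x₃| < a}` are represented in cylindrical
coordinates as functions `u = u(r, z, t)`.  Integration over `Ω` of an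
axisymmetric function is integration over `(0,R) × (-a,a)` with respect to
the weighted measure `r dr dz` (the angular factor `2π` is immaterial and
omitted).
-/

open MeasureTheory Set ENNReal

noncomputable section

/-- `∂_r u` for `u = u(r,z,t)`. -/
def dr (u : ℝ → ℝ → ℝ → ℝ) : ℝ → ℝ → ℝ → ℝ := fun r z t => deriv (fun y => u y z t) r

/-- `∂_z u` for `u = u(r,z,t)`. -/
def dz (u : ℝ → ℝ → ℝ → ℝ) : ℝ → ℝ → ℝ → ℝ := fun r z t => deriv (fun y => u r y t) z

/-- `∂_t u` for `u = u(r,z,t)`. -/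
def dt (u : ℝ → ℝ → ℝ → ℝ) : ℝ → ℝ → ℝ → ℝ := fun r z t => deriv (fun y => u r z y) t

/-- `∂_r u` for a time-independent axisymmetric function `u = u(r,z)`. -/
def pr (u : ℝ → ℝ → ℝ) : ℝ → ℝ → ℝ := fun r z => deriv (fun y => u y z) r

/-- `∂_z u` for a time-independent axisymmetric function `u = u(r,z)`. -/
def pz (u : ℝ → ℝ → ℝ) : ℝ → ℝ → ℝ := fun r z => deriv (fun y => u r y) z

/-- The Laplacian `Δ = ∂_r² + (1/r)∂_r + ∂_z²` on axisymmetric functions. -/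
def lapAx (u : ℝ → ℝ → ℝ → ℝ) : ℝ → ℝ → ℝ → ℝ :=
  fun r z t => dr (dr u) r z t + (1 / r) * dr u r z t + dz (dz u) r z t

/-- The measure `r dr dz` on the cross-section `(0,R) × (-a,a)` of the cylinder:
integration of axisymmetric functions over `Ω`. -/
def cylMeasure (R a : ℝ) : Measure (ℝ × ℝ) :=
  ((volume : Measure (ℝ × ℝ)).restrict (Ioo 0 R ×ˢ Ioo (-a) a)).withDensity
    fun x => ENNReal.ofReal x.1

/-- `|u|_{p,Ω}`: the `L^p(Ω)` norm of an axisymmetric function `u = u(r,z)`. -/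
def spNorm (R a : ℝ) (p : ℝ≥0∞) (u : ℝ → ℝ → ℝ) : ℝ :=
  (eLpNorm (fun x : ℝ × ℝ => u x.1 x.2) p (cylMeasure R a)).toReal

/-- `|u|_{p,q,Ω^t}`: the mixed norm `‖ ‖u(·,t')‖_{L^p(Ω)} ‖_{L^q(0,t)}`. -/
def mixNorm (R a : ℝ) (p q : ℝ≥0∞) (t : ℝ) (u : ℝ → ℝ → ℝ → ℝ) : ℝ :=
  (eLpNorm (fun t' => spNorm R a p fun r z => u r z t') q
    ((volume : Measure ℝ).restrict (Ioo 0 t))).toReal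

/-- `|u|_{p,Ω^t}`: the `L^p(Ω × (0,t))` norm. -/
def stNorm (R a : ℝ) (p : ℝ≥0∞) (t : ℝ) (u : ℝ → ℝ → ℝ → ℝ) : ℝ :=
  mixNorm R a p p t u

/-- `|∇u|` for an axisymmetric scalar function `u`. -/
def gradMag (u : ℝ → ℝ → ℝ → ℝ) : ℝ → ℝ → ℝ → ℝ :=
  fun r z t => Real.sqrt (dr u r z t ^ 2 + dz u r z t ^ 2)

/-- The energy norm `‖u‖_{V(Ω^t)} = |u|_{2,∞,Ω^t} + |∇u|_{2,Ω^t}`. -/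
def vNorm (R a t : ℝ) (u : ℝ → ℝ → ℝ → ℝ) : ℝ :=
  mixNorm R a 2 ∞ t u + stNorm R a 2 t (gradMag u)

/-- The `r`-component of the curl of an axisymmetric vector field:
`(curl w)_r = -∂_z w_φ`. -/
def curlR (wphi : ℝ → ℝ → ℝ → ℝ) : ℝ → ℝ → ℝ → ℝ := fun r z t => -(dz wphi r z t)

/-- The `φ`-component of the curl: `(curl w)_φ = ∂_z w_r - ∂_r w_z`. -/
def curlPhi (wr wz : ℝ → ℝ → ℝ → ℝ) : ℝ → ℝ → ℝ → ℝ :=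
  fun r z t => dz wr r z t - dr wz r z t

/-- The `z`-component of the curl: `(curl w)_z = ∂_r w_φ + w_φ/r`. -/
def curlZ (wphi : ℝ → ℝ → ℝ → ℝ) : ℝ → ℝ → ℝ → ℝ :=
  fun r z t => dr wphi r z t + wphi r z t / r

/-- The anisotropic Sobolev norm `‖u‖_{W₂^{k,k/2}(Ω^t)}` of an axisymmetric
function. -/
def sobNorm (R a : ℝ) (k : ℕ) (t : ℝ) (u : ℝ → ℝ → ℝ → ℝ) : ℝ :=
  Real.sqrt (∑ i ∈ Finset.range (k + 1), ∑ j ∈ Finset.range (k + 1),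
    ∑ m ∈ Finset.range (k + 1),
      if i + j + 2 * m ≤ k then (stNorm R a 2 t (dr^[i] (dz^[j] (dt^[m] u)))) ^ 2 else 0)

/-- The spatial Sobolev norm `‖u‖_{H^k(Ω)}` of an axisymmetric function. -/
def spSobNorm (R a : ℝ) (k : ℕ) (u : ℝ → ℝ → ℝ) : ℝ :=
  Real.sqrt (∑ i ∈ Finset.range (k + 1), ∑ j ∈ Finset.range (k + 1),
    if i + j ≤ k then (spNorm R a 2 (pr^[i] (pz^[j] u))) ^ 2 else 0)

/-- `‖g‖_{L₂(0,t;L₃(S₁))}` for an axisymmetric function `g = g(r,z,t)`, where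
`S₁` is the lateral boundary `{r = R}` of the cylinder (surface measure `R dz`). -/
def latNorm (R a t : ℝ) (g : ℝ → ℝ → ℝ → ℝ) : ℝ :=
  (∫ t' in Ioo 0 t,
    ((∫ z in Ioo (-a) a, |g R z t'| ^ (3 : ℝ) * R) ^ ((1 : ℝ) / 3)) ^ (2 : ℝ)) ^ ((1 : ℝ) / 2)

/-- A regular axially symmetric solution of the Navier–Stokes system
`∂_t v + (v·∇)v − νΔv + ∇p = f`, `div v = 0` in the finite cylinder of radius
`R` and half-height `a`, on the time interval `(0,T)`, written in cylindrical
coordinates (equations (1.7)), with the boundary conditions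
`v_r = v_φ = ω_φ = 0` on `S₁` and `v_z = ω_φ = ∂_z v_φ = 0` on `S₂`, smooth up
to the boundary, and satisfying the Liu–Wang expansions near the axis `r = 0`. -/
structure AxiSol (R a ν T : ℝ) where
  vr : ℝ → ℝ → ℝ → ℝ
  vphi : ℝ → ℝ → ℝ → ℝ
  vz : ℝ → ℝ → ℝ → ℝ
  press : ℝ → ℝ → ℝ → ℝ
  fr : ℝ → ℝ → ℝ → ℝ
  fphi : ℝ → ℝ → ℝ → ℝ
  fz : ℝ → ℝ → ℝ → ℝ
  smooth_vr : ContDiff ℝ (⊤ : ℕ∞) fun x : ℝ × ℝ × ℝ => vr x.1 x.2.1 x.2.2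
  smooth_vphi : ContDiff ℝ (⊤ : ℕ∞) fun x : ℝ × ℝ × ℝ => vphi x.1 x.2.1 x.2.2
  smooth_vz : ContDiff ℝ (⊤ : ℕ∞) fun x : ℝ × ℝ × ℝ => vz x.1 x.2.1 x.2.2
  smooth_press : ContDiff ℝ (⊤ : ℕ∞) fun x : ℝ × ℝ × ℝ => press x.1 x.2.1 x.2.2
  smooth_fr : ContDiff ℝ (⊤ : ℕ∞) fun x : ℝ × ℝ × ℝ => fr x.1 x.2.1 x.2.2
  smooth_fphi : ContDiff ℝ (⊤ : ℕ∞) fun x : ℝ × ℝ × ℝ => fphi x.1 x.2.1 x.2.2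
  smooth_fz : ContDiff ℝ (⊤ : ℕ∞) fun x : ℝ × ℝ × ℝ => fz x.1 x.2.1 x.2.2
  /-- the radial component of the Navier–Stokes equations (1.7)₁ -/
  eq_vr : ∀ r z t, r ∈ Ioo 0 R → z ∈ Ioo (-a) a → t ∈ Ioo 0 T →
    dt vr r z t + vr r z t * dr vr r z t + vz r z t * dz vr r z t -
        vphi r z t ^ 2 / r - ν * lapAx vr r z t + ν * vr r z t / r ^ 2 =
      -(dr press r z t) + fr r z t
  /-- the angular component of the Navier–Stokes equations (1.7)₂ -/
  eq_vphi : ∀ r z t, r ∈ Ioo 0 R → z ∈ Ioo (-a) a → t ∈ Ioo 0 T →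
    dt vphi r z t + vr r z t * dr vphi r z t + vz r z t * dz vphi r z t +
        vr r z t * vphi r z t / r - ν * lapAx vphi r z t + ν * vphi r z t / r ^ 2 =
      fphi r z t
  /-- the axial component of the Navier–Stokes equations (1.7)₃ -/
  eq_vz : ∀ r z t, r ∈ Ioo 0 R → z ∈ Ioo (-a) a → t ∈ Ioo 0 T →
    dt vz r z t + vr r z t * dr vz r z t + vz r z t * dz vz r z t -
        ν * lapAx vz r z t =
      -(dz press r z t) + fz r z t
  /-- the divergence-free condition (1.7)₄ -/
  eq_div : ∀ r z t, r ∈ Ioo 0 R → z ∈ Ioo (-a) a → t ∈ Ioo 0 T →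
    dr vr r z t + vr r z t / r + dz vz r z t = 0
  /-- `v_r = 0` on `S₁` -/
  bc_vr : ∀ z t, z ∈ Icc (-a) a → t ∈ Ioo 0 T → vr R z t = 0
  /-- `v_φ = 0` on `S₁` -/
  bc_vphi : ∀ z t, z ∈ Icc (-a) a → t ∈ Ioo 0 T → vphi R z t = 0
  /-- `ω_φ = 0` on `S₁` -/
  bc_om_S1 : ∀ z t, z ∈ Icc (-a) a → t ∈ Ioo 0 T → curlPhi vr vz R z t = 0
  /-- `v_z = 0` on `S₂` -/
  bc_vz : ∀ r t, r ∈ Ico 0 R → t ∈ Ioo 0 T → vz r a t = 0 ∧ vz r (-a) t = 0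
  /-- `ω_φ = 0` on `S₂` -/
  bc_om_S2 : ∀ r t, r ∈ Ico 0 R → t ∈ Ioo 0 T →
    curlPhi vr vz r a t = 0 ∧ curlPhi vr vz r (-a) t = 0
  /-- `∂_z v_φ = 0` on `S₂` -/
  bc_vphiz : ∀ r t, r ∈ Ico 0 R → t ∈ Ioo 0 T →
    dz vphi r a t = 0 ∧ dz vphi r (-a) t = 0
  /-- Liu–Wang expansion `v_r = a₁(z,t) r + a₂(z,t) r² + …` near the axis -/
  liuWang_vr : ∃ A : ℝ → ℝ → ℝ → ℝ,
    (ContDiff ℝ (⊤ : ℕ∞) fun x : ℝ × ℝ × ℝ => A x.1 x.2.1 x.2.2) ∧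
    ∀ r z t, vr r z t = r * A r z t
  /-- Liu–Wang expansion `v_φ = b₁(z,t) r + b₂(z,t) r² + …` near the axis -/
  liuWang_vphi : ∃ B : ℝ → ℝ → ℝ → ℝ,
    (ContDiff ℝ (⊤ : ℕ∞) fun x : ℝ × ℝ × ℝ => B x.1 x.2.1 x.2.2) ∧
    ∀ r z t, vphi r z t = r * B r z t

namespace AxiSol

variable {R a ν T : ℝ} (s : AxiSol R a ν T)

/-- `|v| = (v_r² + v_φ² + v_z²)^{1/2}`. -/
def vMag : ℝ → ℝ → ℝ → ℝ :=
  fun r z t => Real.sqrt (s.vr r z t ^ 2 + s.vphi r z t ^ 2 + s.vz r z t ^ 2)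

/-- `|f| = (f_r² + f_φ² + f_z²)^{1/2}`. -/
def fMag : ℝ → ℝ → ℝ → ℝ :=
  fun r z t => Real.sqrt (s.fr r z t ^ 2 + s.fphi r z t ^ 2 + s.fz r z t ^ 2)

/-- `|∇v| = (|∇v_r|² + |∇v_φ|² + |∇v_z|²)^{1/2}`. -/
def gradVMag : ℝ → ℝ → ℝ → ℝ :=
  fun r z t =>
    Real.sqrt (gradMag s.vr r z t ^ 2 + gradMag s.vphi r z t ^ 2 + gradMag s.vz r z t ^ 2)

/-- The swirl `u = r v_φ`. -/
def swirl : ℝ → ℝ → ℝ → ℝ := fun r z t => r * s.vphi r z t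

/-- `f₀ = r f_φ`. -/
def f0 : ℝ → ℝ → ℝ → ℝ := fun r z t => r * s.fphi r z t

/-- `ω_r = -∂_z v_φ`. -/
def omR : ℝ → ℝ → ℝ → ℝ := curlR s.vphi

/-- `ω_φ = ∂_z v_r - ∂_r v_z`. -/
def omPhi : ℝ → ℝ → ℝ → ℝ := curlPhi s.vr s.vz

/-- `ω_z = ∂_r v_φ + v_φ/r`. -/
def omZ : ℝ → ℝ → ℝ → ℝ := curlZ s.vphi

/-- `Φ = ω_r/r`. -/
def Phi : ℝ → ℝ → ℝ → ℝ := fun r z t => curlR s.vphi r z t / r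

/-- `Γ = ω_φ/r`. -/
def Gamma : ℝ → ℝ → ℝ → ℝ := fun r z t => curlPhi s.vr s.vz r z t / r

/-- `F_r = (curl f)_r`. -/
def FR : ℝ → ℝ → ℝ → ℝ := curlR s.fphi

/-- `F_φ = (curl f)_φ`. -/
def FPhi : ℝ → ℝ → ℝ → ℝ := curlPhi s.fr s.fz

/-- `F_z = (curl f)_z`. -/
def FZ : ℝ → ℝ → ℝ → ℝ := curlZ s.fphi

/-- `D₁² = 3|f|²_{2,1,Ω^t} + 2|v(0)|²_{2,Ω}`. -/
def D1sq (t : ℝ) : ℝ :=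
  3 * mixNorm R a 2 1 t s.fMag ^ 2 + 2 * spNorm R a 2 (fun r z => s.vMag r z 0) ^ 2

/-- `D₁`. -/
def D1 (t : ℝ) : ℝ := Real.sqrt (s.D1sq t)

/-- `D₂ = |f₀|_{∞,1,Ω^t} + |u(0)|_{∞,Ω}` with `f₀ = r f_φ`, `u = r v_φ`. -/
def D2 (t : ℝ) : ℝ :=
  mixNorm R a ∞ 1 t s.f0 + spNorm R a ∞ (fun r z => s.swirl r z 0)

/-- `D_* = min {1, D₂}`. -/
def Dstar (t : ℝ) : ℝ := min 1 (s.D2 t)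

/-- `D₃ = (2ν)^{-1/2}(|F_r/r|_{6/5,2,Ω^t} + |F_φ/r|_{6/5,2,Ω^t}) + |Φ(0)|_{2,Ω} + |Γ(0)|_{2,Ω}`. -/
def D3 (t : ℝ) : ℝ :=
  1 / Real.sqrt (2 * ν) *
      (mixNorm R a (6 / 5) 2 t (fun r z t' => s.FR r z t' / r) +
        mixNorm R a (6 / 5) 2 t (fun r z t' => s.FPhi r z t' / r)) +
    spNorm R a 2 (fun r z => s.Phi r z 0) + spNorm R a 2 (fun r z => s.Gamma r z 0)

/-- `D₄² = ν^{-1}(D₁²D₂² + |∂_z u(0)|²_{2,Ω} + |f₀|²_{2,Ω^t})`. -/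
def D4sq (t : ℝ) : ℝ :=
  1 / ν * (s.D1sq t * s.D2 t ^ 2 + spNorm R a 2 (fun r z => dz s.swirl r z 0) ^ 2 +
    stNorm R a 2 t s.f0 ^ 2)

/-- `D₄`. -/
def D4 (t : ℝ) : ℝ := Real.sqrt (s.D4sq t)

/-- `D₅² = D₁²(1+D₂) + D₁²D₂² + |∂_r u(0)|²_{2,Ω} + |f₀|²_{2,Ω^t}`. -/
def D5sq (t : ℝ) : ℝ :=
  s.D1sq t * (1 + s.D2 t) + s.D1sq t * s.D2 t ^ 2 +
    spNorm R a 2 (fun r z => dr s.swirl r z 0) ^ 2 + stNorm R a 2 t s.f0 ^ 2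

/-- `D₅`. -/
def D5 (t : ℝ) : ℝ := Real.sqrt (s.D5sq t)

/-- `D₆² = (D₄+D₅)‖f_φ‖_{L₂(0,t;L₃(S₁))} + ν^{-1}(|F_r|²_{6/5,2,Ω^t} + |F_z|²_{6/5,2,Ω^t})
  + |ω_r(0)|²_{2,Ω} + |ω_z(0)|²_{2,Ω}`. -/
def D6sq (t : ℝ) : ℝ :=
  (s.D4 t + s.D5 t) * latNorm R a t s.fphi +
    1 / ν * (mixNorm R a (6 / 5) 2 t s.FR ^ 2 + mixNorm R a (6 / 5) 2 t s.FZ ^ 2) +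
    spNorm R a 2 (fun r z => s.omR r z 0) ^ 2 + spNorm R a 2 (fun r z => s.omZ r z 0) ^ 2

/-- `D₆`. -/
def D6 (t : ℝ) : ℝ := Real.sqrt (s.D6sq t)

/-- `D₇ = √2 D₂^{1/2} |f_φ/r|^{1/2}_{∞,1,Ω^t} + |v_φ(0)|_{∞,Ω}`. -/
def D7 (t : ℝ) : ℝ :=
  Real.sqrt 2 * s.D2 t ^ ((1 : ℝ) / 2) *
      mixNorm R a ∞ 1 t (fun r z t' => s.fphi r z t' / r) ^ ((1 : ℝ) / 2) +
    spNorm R a ∞ (fun r z => s.vphi r z 0)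

/-- `D₈² = max{ν/4, ν²/8, 27/(4ν³), 1/4}`. -/
def D8sq (_sol : AxiSol R a ν T) : ℝ :=
  max (max (ν / 4) (ν ^ 2 / 8)) (max (27 / (4 * ν ^ 3)) (1 / 4))

/-- `D₈`. -/
def D8 (sol : AxiSol R a ν T) : ℝ := Real.sqrt sol.D8sq

/-- `X(t) = ‖Φ‖_{V(Ω^t)} + ‖Γ‖_{V(Ω^t)}`. -/
def X (t : ℝ) : ℝ := vNorm R a t s.Phi + vNorm R a t s.Gamma

/-- `G² = |F₁|²_{6/5,2,Ω^t} + |ω₁(0)|²_{2,Ω} + |r f_φ|⁴_{4,Ω^t} + |v_φ²(0)/r|²_{2,Ω}`,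
with `F₁ = F_φ/r`, `ω₁ = ω_φ/r`. -/
def Gsq (t : ℝ) : ℝ :=
  mixNorm R a (6 / 5) 2 t (fun r z t' => s.FPhi r z t' / r) ^ 2 +
    spNorm R a 2 (fun r z => s.Gamma r z 0) ^ 2 +
    stNorm R a 4 t s.f0 ^ 4 + spNorm R a 2 (fun r z => s.vphi r z 0 ^ 2 / r) ^ 2

/-- `G`. -/
def G (t : ℝ) : ℝ := Real.sqrt (s.Gsq t)

/-- `G₁ = |f_φ|_{∞,1,Ω^t} + |v_φ(0)|_{∞,Ω}`. -/
def G1 (t : ℝ) : ℝ :=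
  mixNorm R a ∞ 1 t s.fphi + spNorm R a ∞ (fun r z => s.vphi r z 0)

end AxiSol


open Filter Topology

def unc (u : ℝ → ℝ → ℝ → ℝ) : ℝ × ℝ × ℝ → ℝ := fun x => u x.1 x.2.1 x.2.2

section slices
variable {u : ℝ → ℝ → ℝ → ℝ} (hu : ContDiff ℝ (⊤ : ℕ∞) (unc u))

lemma line1_contDiff (z t : ℝ) : ContDiff ℝ (⊤ : ℕ∞) (fun y : ℝ => (y, z, t)) :=
  contDiff_id.prodMk contDiff_const

lemma line2_contDiff (r t : ℝ) : ContDiff ℝ (⊤ : ℕ∞) (fun y : ℝ => (r, y, t)) :=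
  contDiff_const.prodMk (contDiff_id.prodMk contDiff_const)

lemma line3_contDiff (r z : ℝ) : ContDiff ℝ (⊤ : ℕ∞) (fun y : ℝ => (r, z, y)) :=
  contDiff_const.prodMk (contDiff_const.prodMk contDiff_id)

include hu

lemma slice1_contDiff (z t : ℝ) : ContDiff ℝ (⊤ : ℕ∞) (fun y => u y z t) :=
  hu.comp (line1_contDiff z t)

lemma slice2_contDiff (r t : ℝ) : ContDiff ℝ (⊤ : ℕ∞) (fun y => u r y t) :=
  hu.comp (line2_contDiff r t)

lemma slice3_contDiff (r z : ℝ) : ContDiff ℝ (⊤ : ℕ∞) (fun y => u r z y) :=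
  hu.comp (line3_contDiff r z)

lemma hasDerivAt_dr (r z t : ℝ) :
    HasDerivAt (fun y => u y z t) (fderiv ℝ (unc u) (r, z, t) (1, 0, 0)) r := by
  have h1 : HasDerivAt (fun y : ℝ => (y, z, t)) ((1 : ℝ), (0 : ℝ), (0 : ℝ)) r := by
    simpa using (hasDerivAt_id r).prodMk
      ((hasDerivAt_const r z).prodMk (hasDerivAt_const r t))
  have := (hu.differentiable (by simp) (r, z, t)).hasFDerivAt.comp_hasDerivAt r h1
  simpa [Function.comp_def, unc] using this

lemma hasDerivAt_dz (r z t : ℝ) :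
    HasDerivAt (fun y => u r y t) (fderiv ℝ (unc u) (r, z, t) (0, 1, 0)) z := by
  have h1 : HasDerivAt (fun y : ℝ => (r, y, t)) ((0 : ℝ), (1 : ℝ), (0 : ℝ)) z := by
    simpa using (hasDerivAt_const z r).prodMk
      ((hasDerivAt_id z).prodMk (hasDerivAt_const z t))
  have := (hu.differentiable (by simp) (r, z, t)).hasFDerivAt.comp_hasDerivAt z h1
  simpa [Function.comp_def, unc] using this

lemma hasDerivAt_dt (r z t : ℝ) :
    HasDerivAt (fun y => u r z y) (fderiv ℝ (unc u) (r, z, t) (0, 0, 1)) t := by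
  have h1 : HasDerivAt (fun y : ℝ => (r, z, y)) ((0 : ℝ), (0 : ℝ), (1 : ℝ)) t := by
    simpa using (hasDerivAt_const t r).prodMk
      ((hasDerivAt_const t z).prodMk (hasDerivAt_id t))
  have := (hu.differentiable (by simp) (r, z, t)).hasFDerivAt.comp_hasDerivAt t h1
  simpa [Function.comp_def, unc] using this

lemma dr_eq (r z t : ℝ) : dr u r z t = fderiv ℝ (unc u) (r, z, t) (1, 0, 0) :=
  (hasDerivAt_dr hu r z t).deriv

lemma dz_eq (r z t : ℝ) : dz u r z t = fderiv ℝ (unc u) (r, z, t) (0, 1, 0) :=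
  (hasDerivAt_dz hu r z t).deriv

lemma dt_eq (r z t : ℝ) : dt u r z t = fderiv ℝ (unc u) (r, z, t) (0, 0, 1) :=
  (hasDerivAt_dt hu r z t).deriv

lemma contDiff_fderiv_apply (v : ℝ × ℝ × ℝ) :
    ContDiff ℝ (⊤ : ℕ∞) (fun x => fderiv ℝ (unc u) x v) :=
  (hu.fderiv_right (m := (⊤ : ℕ∞)) (by simp)).clm_apply contDiff_const

lemma contDiff_dr : ContDiff ℝ (⊤ : ℕ∞) (unc (dr u)) := by
  have : unc (dr u) = fun x => fderiv ℝ (unc u) x (1, 0, 0) := by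
    funext x; exact dr_eq hu x.1 x.2.1 x.2.2
  rw [this]; exact contDiff_fderiv_apply hu _

lemma contDiff_dz : ContDiff ℝ (⊤ : ℕ∞) (unc (dz u)) := by
  have : unc (dz u) = fun x => fderiv ℝ (unc u) x (0, 1, 0) := by
    funext x; exact dz_eq hu x.1 x.2.1 x.2.2
  rw [this]; exact contDiff_fderiv_apply hu _

lemma contDiff_dt : ContDiff ℝ (⊤ : ℕ∞) (unc (dt u)) := by
  have : unc (dt u) = fun x => fderiv ℝ (unc u) x (0, 0, 1) := by
    funext x; exact dt_eq hu x.1 x.2.1 x.2.2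
  rw [this]; exact contDiff_fderiv_apply hu _

end slices
noncomputable section

/-- Second derivative test at a max over `Icc c d` with vanishing first derivative. -/
lemma second_deriv_nonpos_of_max {g : ℝ → ℝ} (hg : ContDiff ℝ (⊤ : ℕ∞) g)
    {c d x : ℝ} (hcd : c < d) (hx : x ∈ Icc c d)
    (hmax : ∀ y ∈ Icc c d, g y ≤ g x) (hder : deriv g x = 0) :
    deriv (deriv g) x ≤ 0 := by
  by_contra hL
  push_neg at hL
  set L := deriv (deriv g) x with hLdef
  have hg' : ContDiff ℝ (⊤ : ℕ∞) (deriv g) := (contDiff_infty_iff_deriv.mp hg).2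
  have hgd : ∀ y, HasDerivAt g (deriv g y) y := fun y =>
    ((hg.differentiable (by simp)) y).hasDerivAt
  have hg'd : HasDerivAt (deriv g) L x :=
    ((hg'.differentiable (by simp)) x).hasDerivAt
  have hev : ∀ᶠ y in 𝓝[≠] x, L / 2 < slope (deriv g) x y :=
    (hasDerivAt_iff_tendsto_slope.mp hg'd).eventually (eventually_gt_nhds (by linarith))
  rw [eventually_nhdsWithin_iff] at hev
  rcases Metric.eventually_nhds_iff.mp hev with ⟨δ, hδ, hball⟩
  have hkey : ∀ y, y ≠ x → |y - x| < δ → 0 < deriv g y / (y - x) := by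
    intro y hy hyd
    have h1 := hball (show dist y x < δ by simpa [Real.dist_eq] using hyd) hy
    rw [slope_def_field, hder, sub_zero] at h1
    linarith
  rcases eq_or_lt_of_le hx.1 with hxc | hxc
  · -- x = c : use the right side
    have hxd : x < d := hxc ▸ hcd
    set y₀ := min d (x + δ / 2) with hy₀
    have h1 : x < y₀ := lt_min hxd (by linarith)
    have h2 : y₀ ∈ Icc c d := ⟨hx.1.trans h1.le, min_le_left _ _⟩
    obtain ⟨ξ, hξ, hξeq⟩ := exists_hasDerivAt_eq_slope g (deriv g) h1
      hg.continuous.continuousOn (fun y _ => hgd y)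
    have hξδ : |ξ - x| < δ := by
      rw [abs_of_pos (by linarith [hξ.1, hξ.2])]
      have h3 : y₀ ≤ x + δ / 2 := min_le_right _ _
      have := hξ.2
      linarith
    have hpos := hkey ξ (ne_of_gt hξ.1) hξδ
    have hpos' : 0 < deriv g ξ := by
      have hd : 0 < ξ - x := by linarith [hξ.1]
      by_contra hn
      push_neg at hn
      nlinarith [div_nonpos_of_nonpos_of_nonneg hn hd.le]
    have hgy : g y₀ - g x ≤ 0 := by linarith [hmax y₀ h2]
    rw [hξeq] at hpos'
    have : (g y₀ - g x) / (y₀ - x) ≤ 0 :=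
      div_nonpos_of_nonpos_of_nonneg hgy (by linarith)
    linarith
  · -- c < x : use the left side
    set y₀ := max c (x - δ / 2) with hy₀
    have h1 : y₀ < x := max_lt hxc (by linarith)
    have h2 : y₀ ∈ Icc c d := ⟨le_max_left _ _, by linarith [hx.2]⟩
    obtain ⟨ξ, hξ, hξeq⟩ := exists_hasDerivAt_eq_slope g (deriv g) h1
      hg.continuous.continuousOn (fun y _ => hgd y)
    have hξδ : |ξ - x| < δ := by
      rw [abs_of_neg (by linarith [hξ.2])]
      have h3 : x - δ / 2 ≤ y₀ := le_max_right _ _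
      have := hξ.1
      linarith
    have hpos := hkey ξ (ne_of_lt hξ.2) hξδ
    have hneg' : deriv g ξ < 0 := by
      have hd : ξ - x < 0 := by linarith [hξ.2]
      by_contra hn
      push_neg at hn
      nlinarith [div_nonpos_of_nonneg_of_nonpos hn hd.le]
    have hgy : 0 ≤ g x - g y₀ := by linarith [hmax y₀ h2]
    rw [hξeq] at hneg'
    have : 0 ≤ (g x - g y₀) / (x - y₀) := div_nonneg hgy (by linarith)
    linarith

/-- If `g s ≤ g x` for `s` slightly to the left of `x`, then `deriv ≥ 0`. -/
lemma deriv_nonneg_of_left_le {g : ℝ → ℝ} {x L : ℝ} (hg : HasDerivAt g L x)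
    (h : ∀ᶠ s in 𝓝[<] x, g s ≤ g x) : 0 ≤ L := by
  have hslope : Tendsto (slope g x) (𝓝[<] x) (𝓝 L) :=
    (hasDerivAt_iff_tendsto_slope.mp hg).mono_left
      (nhdsWithin_mono x fun y hy => ne_of_lt hy)
  refine ge_of_tendsto hslope ?_
  filter_upwards [h, self_mem_nhdsWithin] with s hs hs'
  rw [slope_def_field]
  exact div_nonneg_of_nonpos (by linarith) (by simp at hs' ⊢; linarith)

lemma core_max_principle (R a T : ℝ) (hR : 0 < R) (ha : 0 < a)
    (w : ℝ → ℝ → ℝ → ℝ) (hw : ContDiff ℝ (⊤ : ℕ∞) (unc w))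
    (F : ℝ → ℝ) (hF : Continuous F) (hF0 : ∀ s, 0 ≤ F s)
    (M : ℝ) (hM : 0 ≤ M)
    (hinit : ∀ r ∈ Icc 0 R, ∀ z ∈ Icc (-a) a, w r z 0 ≤ M)
    (hbc0 : ∀ z ∈ Icc (-a) a, ∀ t' ∈ Ioo 0 T, w 0 z t' ≤ M)
    (hbcR : ∀ z ∈ Icc (-a) a, ∀ t' ∈ Ioo 0 T, w R z t' ≤ M)
    (hneu : ∀ r ∈ Ioo 0 R, ∀ t' ∈ Ioo 0 T, dz w r a t' = 0 ∧ dz w r (-a) t' = 0)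
    (hH : ∀ r ∈ Ioo 0 R, ∀ z ∈ Icc (-a) a, ∀ t' ∈ Ioo 0 T,
      dr w r z t' = 0 → dz w r z t' = 0 → dr (dr w) r z t' ≤ 0 → dz (dz w) r z t' ≤ 0 →
      dt w r z t' ≤ F t')
    (t₁ : ℝ) (ht₁ : 0 < t₁) (ht₁T : t₁ < T) :
    ∀ r ∈ Icc 0 R, ∀ z ∈ Icc (-a) a, w r z t₁ ≤ M + ∫ s in (0:ℝ)..t₁, F s := by
  intro r₀ hr₀ z₀ hz₀
  set P : ℝ → ℝ := fun s => ∫ x in (0:ℝ)..s, F x with hPdef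
  have hPd : ∀ s, HasDerivAt P (F s) s := by
    intro s
    exact intervalIntegral.integral_hasDerivAt_right (hF.intervalIntegrable _ _)
      (hF.stronglyMeasurable.stronglyMeasurableAtFilter) hF.continuousAt
  have hPc : Continuous P := by
    rw [continuous_iff_continuousAt]; exact fun s => (hPd s).continuousAt
  have key : ∀ ε > (0 : ℝ), w r₀ z₀ t₁ ≤ M + P t₁ + ε * (1 + t₁) := by
    intro ε hε
    set W : (ℝ × ℝ) × ℝ → ℝ :=
      fun q => w q.1.1 q.1.2 q.2 - (M + P q.2 + ε * (1 + q.2)) with hWdef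
    have hWc : Continuous W := by
      apply Continuous.sub
      · exact hw.continuous.comp
          ((continuous_fst.fst).prodMk ((continuous_fst.snd).prodMk continuous_snd))
      · exact ((continuous_const.add (hPc.comp continuous_snd)).add
          (continuous_const.mul (continuous_const.add continuous_snd)))
    set box : Set (ℝ × ℝ) := Icc 0 R ×ˢ Icc (-a) a with hboxdef
    set K : Set ((ℝ × ℝ) × ℝ) := box ×ˢ Icc 0 t₁ with hKdef
    have hKc : IsCompact K := ((isCompact_Icc.prod isCompact_Icc).prod isCompact_Icc)
    set K0 : Set ((ℝ × ℝ) × ℝ) := K ∩ {q | 0 ≤ W q} with hK0def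
    by_contra hcon
    push_neg at hcon
    have hq0 : ((r₀, z₀), t₁) ∈ K0 :=
      ⟨⟨⟨hr₀, hz₀⟩, ⟨le_of_lt ht₁, le_refl _⟩⟩, by
        simp only [mem_setOf_eq, hWdef]; linarith⟩
    have hK0c : IsCompact K0 := hKc.inter_right (isClosed_le continuous_const hWc)
    obtain ⟨qs, hqsK0, hqsmin⟩ :=
      hK0c.exists_isMinOn ⟨_, hq0⟩ (continuous_snd.continuousOn (s := K0))
    set rs := qs.1.1 with hrs
    set zs := qs.1.2 with hzs
    set ts := qs.2 with hts
    have hqsK : qs ∈ K := hqsK0.1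
    have hqsW : 0 ≤ W qs := hqsK0.2
    have hrsmem : rs ∈ Icc 0 R := hqsK.1.1
    have hzsmem : zs ∈ Icc (-a) a := hqsK.1.2
    have htsmem : ts ∈ Icc 0 t₁ := hqsK.2
    have hmin : ∀ q ∈ K0, ts ≤ q.2 := fun q hq => hqsmin hq
    have hP0 : P 0 = 0 := intervalIntegral.integral_same
    -- Step 1 : 0 < ts
    have hts0 : 0 < ts := by
      rcases eq_or_lt_of_le htsmem.1 with h | h
      · exfalso
        have h1 : w rs zs 0 ≤ M := hinit rs hrsmem zs hzsmem
        have h2 : W qs = w rs zs ts - (M + P ts + ε * (1 + ts)) := rfl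
        rw [← h] at h2
        rw [hP0] at h2
        have : W qs < 0 := by rw [h2]; nlinarith [h1, hε]
        linarith
      · exact h
    -- Step 2 : everything strictly before ts is negative
    have hstep2 : ∀ p ∈ box, ∀ s, s ∈ Icc 0 t₁ → s < ts → W (p, s) < 0 := by
      intro p hp s hs hsts
      by_contra hcon2
      push_neg at hcon2
      have : (p, s) ∈ K0 := ⟨⟨hp, hs⟩, hcon2⟩
      have := hmin _ this
      simp only at this
      linarith
    -- Step 3 : at time ts, W ≤ 0 everywhere
    have hstep3 : ∀ p ∈ box, W (p, ts) ≤ 0 := by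
      intro p hp
      by_contra hcon3
      push_neg at hcon3
      have hcont : ContinuousAt (fun s => W (p, s)) ts :=
        (hWc.comp (continuous_const.prodMk continuous_id)).continuousAt
      have hev : ∀ᶠ s in 𝓝[<] ts, 0 < W (p, s) :=
        ((hcont.eventually (eventually_gt_nhds hcon3)).filter_mono nhdsWithin_le_nhds)
      have hev2 : ∀ᶠ s in 𝓝[<] ts, s ∈ Ioo 0 ts :=
        eventually_of_mem (Ioo_mem_nhdsLT hts0) (fun s hs => hs)
      obtain ⟨s, hs1, hs2⟩ := (hev.and hev2).exists
      have : W (p, s) < 0 :=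
        hstep2 p hp s ⟨hs2.1.le, hs2.2.le.trans htsmem.2⟩ hs2.2
      linarith
    -- Step 4 : W qs = 0
    have hqsW0 : W qs = 0 :=
      le_antisymm (hstep3 qs.1 hqsK.1) hqsW
    have hval : w rs zs ts = M + P ts + ε * (1 + ts) := by
      have : W qs = w rs zs ts - (M + P ts + ε * (1 + ts)) := rfl
      rw [hqsW0] at this; linarith
    -- Step 5 : the max value exceeds M
    have hPts : 0 ≤ P ts := intervalIntegral.integral_nonneg hts0.le (fun s _ => hF0 s)
    have hvalM : M < w rs zs ts := by rw [hval]; nlinarith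
    -- Step 6 : ts ∈ Ioo 0 T
    have htsT : ts ∈ Ioo 0 T := ⟨hts0, lt_of_le_of_lt htsmem.2 ht₁T⟩
    -- Step 7 : rs ∈ Ioo 0 R
    have hrsIoo : rs ∈ Ioo 0 R := by
      constructor
      · rcases eq_or_lt_of_le hrsmem.1 with h | h
        · exfalso; have h7 := hbc0 zs hzsmem ts htsT; rw [← h] at hvalM; linarith
        · exact h
      · rcases eq_or_lt_of_le hrsmem.2 with h | h
        · exfalso; have h7 := hbcR zs hzsmem ts htsT; rw [h] at hvalM; linarith
        · exact h
    -- Step 8 : r-direction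
    set g₁ : ℝ → ℝ := fun y => w y zs ts with hg₁def
    have hmax₁ : ∀ y ∈ Icc 0 R, g₁ y ≤ g₁ rs := by
      intro y hy
      have := hstep3 (y, zs) ⟨hy, hzsmem⟩
      have h2 : W ((y, zs), ts) = w y zs ts - (M + P ts + ε * (1 + ts)) := rfl
      simp only [hg₁def]
      rw [h2] at this
      linarith [hval]
    have hder₁ : deriv g₁ rs = 0 := by
      apply IsLocalMax.deriv_eq_zero
      have : Icc 0 R ∈ 𝓝 rs := Icc_mem_nhds hrsIoo.1 hrsIoo.2
      exact eventually_of_mem this hmax₁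
    have hdd₁ : deriv (deriv g₁) rs ≤ 0 :=
      second_deriv_nonpos_of_max (slice1_contDiff hw zs ts) hR hrsmem hmax₁ hder₁
    -- Step 9 : z-direction
    set g₂ : ℝ → ℝ := fun y => w rs y ts with hg₂def
    have hmax₂ : ∀ y ∈ Icc (-a) a, g₂ y ≤ g₂ zs := by
      intro y hy
      have := hstep3 (rs, y) ⟨hrsmem, hy⟩
      have h2 : W ((rs, y), ts) = w rs y ts - (M + P ts + ε * (1 + ts)) := rfl
      simp only [hg₂def]
      rw [h2] at this
      linarith [hval]
    have hder₂ : deriv g₂ zs = 0 := by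
      rcases eq_or_lt_of_le hzsmem.1 with h | h
      · show dz w rs zs ts = 0
        rw [← h]
        exact (hneu rs hrsIoo ts htsT).2
      · rcases eq_or_lt_of_le hzsmem.2 with h2 | h2
        · show dz w rs zs ts = 0
          rw [h2]
          exact (hneu rs hrsIoo ts htsT).1
        · apply IsLocalMax.deriv_eq_zero
          have : Icc (-a) a ∈ 𝓝 zs := Icc_mem_nhds h h2
          exact eventually_of_mem this hmax₂
    have hdd₂ : deriv (deriv g₂) zs ≤ 0 :=
      second_deriv_nonpos_of_max (slice2_contDiff hw rs ts) (by linarith) hzsmem hmax₂ hder₂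
    -- Step 10 : time derivative at the first touching point
    have h1 : HasDerivAt (fun s => w rs zs s) (dt w rs zs ts) ts :=
      (((slice3_contDiff hw rs zs).differentiable (by simp)) ts).hasDerivAt
    have h3 : HasDerivAt (fun s : ℝ => ε * (1 + s)) ε ts := by
      simpa using ((hasDerivAt_id ts).const_add (1 : ℝ)).const_mul ε
    have hG3 : HasDerivAt (fun s => W ((rs, zs), s))
        (dt w rs zs ts - (F ts + ε)) ts := by
      have h4 : HasDerivAt (fun s => M + P s + ε * (1 + s)) (F ts + ε) ts :=
        ((hPd ts).const_add M).add h3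
      exact h1.sub h4
    have hle : ∀ᶠ s in 𝓝[<] ts, W ((rs, zs), s) ≤ W ((rs, zs), ts) := by
      filter_upwards [Ioo_mem_nhdsLT hts0] with s hs
      have h5 : W ((rs, zs), s) < 0 :=
        hstep2 (rs, zs) hqsK.1 s ⟨hs.1.le, hs.2.le.trans htsmem.2⟩ hs.2
      have h6 : W ((rs, zs), ts) = 0 := hqsW0
      linarith
    have hdt : F ts + ε ≤ dt w rs zs ts := by
      have := deriv_nonneg_of_left_le hG3 hle
      linarith
    -- Step 11 : contradiction with the differential inequality
    have hcontr := hH rs hrsIoo zs hzsmem ts htsT hder₁ hder₂ hdd₁ hdd₂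
    linarith
  -- remove ε
  have h1t₁ : (0 : ℝ) < 1 + t₁ := by linarith
  refine le_of_forall_pos_le_add ?_
  intro ε hε
  calc w r₀ z₀ t₁ ≤ M + P t₁ + ε / (1 + t₁) * (1 + t₁) := key _ (by positivity)
    _ = M + P t₁ + ε := by field_simp

section meas

variable {R a : ℝ}

lemma cylMeasure_ae_mem : ∀ᵐ x ∂(cylMeasure R a), x ∈ Ioo 0 R ×ˢ Ioo (-a) a := by
  rw [ae_iff]
  have hbox : MeasurableSet (Ioo (0:ℝ) R ×ˢ Ioo (-a) a) := measurableSet_Ioo.prod measurableSet_Ioo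
  have h1 : {x : ℝ × ℝ | ¬x ∈ Ioo 0 R ×ˢ Ioo (-a) a} = (Ioo 0 R ×ˢ Ioo (-a) a)ᶜ := rfl
  rw [h1, cylMeasure, withDensity_apply _ hbox.compl,
    Measure.restrict_restrict hbox.compl]
  simp

lemma eLpNormTop_le_of_bound {g : ℝ × ℝ → ℝ} {C : ℝ}
    (h : ∀ x ∈ Ioo (0:ℝ) R ×ˢ Ioo (-a) a, |g x| ≤ C) :
    eLpNorm g ∞ (cylMeasure R a) ≤ ENNReal.ofReal C := by
  rw [eLpNorm_exponent_top]
  refine eLpNormEssSup_le_of_ae_bound (C := C) ?_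
  filter_upwards [cylMeasure_ae_mem] with x hx
  rw [Real.norm_eq_abs]
  exact h x hx

lemma ofReal_abs_le_eLpNormTop (hR : 0 < R) (ha : 0 < a) {g : ℝ × ℝ → ℝ}
    (hg : Continuous g) {x : ℝ × ℝ} (hx : x ∈ Icc (0:ℝ) R ×ˢ Icc (-a) a) :
    ENNReal.ofReal |g x| ≤ eLpNorm g ∞ (cylMeasure R a) := by
  rw [eLpNorm_exponent_top]
  by_contra hcon
  push_neg at hcon
  have hne : eLpNormEssSup g (cylMeasure R a) ≠ ⊤ := hcon.trans_le le_top |>.ne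
  set e := (eLpNormEssSup g (cylMeasure R a)).toReal with he
  have hee : ENNReal.ofReal e = eLpNormEssSup g (cylMeasure R a) := ENNReal.ofReal_toReal hne
  have heg : e < |g x| := by
    have := ENNReal.toReal_lt_toReal hne (by simp : ENNReal.ofReal |g x| ≠ ⊤) |>.mpr hcon
    rwa [ENNReal.toReal_ofReal (abs_nonneg _)] at this
  set c := (e + |g x|) / 2 with hc
  have hec : e < c := by simp only [hc]; linarith
  have hcg : c < |g x| := by simp only [hc]; linarith
  set U := {y : ℝ × ℝ | c < |g y|} with hU
  have hUopen : IsOpen U := isOpen_lt continuous_const (hg.abs)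
  have hxU : x ∈ U := hcg
  -- x lies in the closure of the open box
  have hxcl : x ∈ closure (Ioo (0:ℝ) R ×ˢ Ioo (-a) a) := by
    rw [closure_prod_eq, closure_Ioo hR.ne, closure_Ioo (by linarith : -a ≠ a)]
    exact hx
  obtain ⟨v, hvU, hvbox⟩ := mem_closure_iff.mp hxcl U hUopen hxU
  have hv1 : 0 < v.1 := hvbox.1.1
  obtain ⟨η₀, hη₀, hball₀⟩ := Metric.isOpen_iff.mp (hUopen.inter
    (isOpen_Ioo.prod isOpen_Ioo)) v ⟨hvU, hvbox⟩
  set η := min η₀ (v.1 / 2) with hη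
  have hηpos : 0 < η := lt_min hη₀ (by linarith)
  have hball : Metric.ball v η ⊆ U ∩ Ioo 0 R ×ˢ Ioo (-a) a :=
    (Metric.ball_subset_ball (min_le_left _ _)).trans hball₀
  -- the ball has positive cylMeasure
  have hdens : ∀ y ∈ Metric.ball v η, ENNReal.ofReal (v.1 / 2) ≤ ENNReal.ofReal y.1 := by
    intro y hy
    apply ENNReal.ofReal_le_ofReal
    have h1 : |y.1 - v.1| ≤ dist y v := by
      rw [Prod.dist_eq]
      simpa [Real.dist_eq] using le_max_left (dist y.1 v.1) (dist y.2 v.2)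
    have h2 : dist y v < η := hy
    have h3 : η ≤ v.1 / 2 := min_le_right _ _
    have := abs_le.mp (h1.trans (h2.le.trans h3))
    linarith [this.1]
  have hposball : 0 < cylMeasure R a (Metric.ball v η) := by
    rw [cylMeasure, withDensity_apply _ Metric.isOpen_ball.measurableSet,
      Measure.restrict_restrict Metric.isOpen_ball.measurableSet]
    have hsub : Metric.ball v η ∩ Ioo 0 R ×ˢ Ioo (-a) a = Metric.ball v η :=
      inter_eq_left.mpr fun y hy => (hball hy).2
    rw [hsub]
    calc (0:ℝ≥0∞) < ENNReal.ofReal (v.1 / 2) * volume (Metric.ball v η) := by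
          apply ENNReal.mul_pos
          · simp [ENNReal.ofReal_pos]; linarith
          · exact (Metric.measure_ball_pos volume v hηpos).ne'
      _ = ∫⁻ _ in Metric.ball v η, ENNReal.ofReal (v.1 / 2) ∂volume := by
          rw [setLIntegral_const]
      _ ≤ ∫⁻ y in Metric.ball v η, ENNReal.ofReal y.1 ∂volume := by
          apply setLIntegral_mono' Metric.isOpen_ball.measurableSet
          intro y hy
          exact hdens y hy
  -- but a.e. bound contradicts this
  have hae := enorm_ae_le_eLpNormEssSup g (cylMeasure R a)
  rw [ae_iff] at hae
  have hsub2 : Metric.ball v η ⊆ {y : ℝ × ℝ | ¬(‖g y‖ₑ ≤ eLpNormEssSup g (cylMeasure R a))} := by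
    intro y hy
    have hyU : y ∈ U := (hball hy).1
    simp only [mem_setOf_eq, not_le]
    calc eLpNormEssSup g (cylMeasure R a) = ENNReal.ofReal e := hee.symm
      _ < ENNReal.ofReal |g y| := by
          have hcy : c < |g y| := hyU
          have h9 : e < |g y| := lt_trans hec hcy
          have h0 : (0:ℝ) ≤ e := ENNReal.toReal_nonneg
          exact (ENNReal.ofReal_lt_ofReal_iff (by linarith)).mpr h9
      _ = ‖g y‖ₑ := by
          rw [Real.enorm_eq_ofReal_abs]
  have := measure_mono_null hsub2 hae
  rw [this] at hposball
  exact lt_irrefl _ hposball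

end meas

section spnorm
variable {R a : ℝ}

lemma spNorm_top_le {g : ℝ → ℝ → ℝ} {C : ℝ} (hC : 0 ≤ C)
    (h : ∀ x ∈ Ioo (0:ℝ) R ×ˢ Ioo (-a) a, |g x.1 x.2| ≤ C) :
    spNorm R a ∞ g ≤ C :=
  ENNReal.toReal_le_of_le_ofReal hC (eLpNormTop_le_of_bound h)

lemma abs_le_spNorm_top (hR : 0 < R) (ha : 0 < a) {g : ℝ → ℝ → ℝ}
    (hg : Continuous fun x : ℝ × ℝ => g x.1 x.2) {x : ℝ × ℝ}
    (hx : x ∈ Icc (0:ℝ) R ×ˢ Icc (-a) a) :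
    |g x.1 x.2| ≤ spNorm R a ∞ g := by
  set C := sSup ((fun y : ℝ × ℝ => |g y.1 y.2|) '' (Icc (0:ℝ) R ×ˢ Icc (-a) a)) with hC
  have hKc : IsCompact (Icc (0:ℝ) R ×ˢ Icc (-a) a) := isCompact_Icc.prod isCompact_Icc
  have hbdd : BddAbove ((fun y : ℝ × ℝ => |g y.1 y.2|) '' (Icc (0:ℝ) R ×ˢ Icc (-a) a)) :=
    hKc.bddAbove_image hg.abs.continuousOn
  have hCb : ∀ y ∈ Ioo (0:ℝ) R ×ˢ Ioo (-a) a, |g y.1 y.2| ≤ C := fun y hy =>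
    le_csSup hbdd (mem_image_of_mem _
      ((Set.prod_mono Ioo_subset_Icc_self Ioo_subset_Icc_self) hy))
  have hfin : eLpNorm (fun x : ℝ × ℝ => g x.1 x.2) ∞ (cylMeasure R a) ≠ ⊤ :=
    ((eLpNormTop_le_of_bound hCb).trans_lt ENNReal.ofReal_lt_top).ne
  have h1 := ofReal_abs_le_eLpNormTop hR ha hg hx
  calc |g x.1 x.2| = (ENNReal.ofReal |g x.1 x.2|).toReal :=
        (ENNReal.toReal_ofReal (abs_nonneg _)).symm
    _ ≤ spNorm R a ∞ g := ENNReal.toReal_mono hfin h1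

end spnorm


section swirlpde
open Filter Topology
variable {R a ν T : ℝ} (s : AxiSol R a ν T)

lemma smooth_vphi' : ContDiff ℝ (⊤ : ℕ∞) (unc s.vphi) := s.smooth_vphi

lemma smooth_swirl : ContDiff ℝ (⊤ : ℕ∞) (unc s.swirl) :=
  contDiff_fst.mul s.smooth_vphi

lemma dt_swirl (r z t : ℝ) : dt s.swirl r z t = r * dt s.vphi r z t := by
  show deriv (fun y => r * s.vphi r z y) t = r * deriv (fun y => s.vphi r z y) t
  exact deriv_const_mul_field r

lemma dz_swirl (r z t : ℝ) : dz s.swirl r z t = r * dz s.vphi r z t := by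
  show deriv (fun y => r * s.vphi r y t) z = r * deriv (fun y => s.vphi r y t) z
  exact deriv_const_mul_field r

lemma hasDerivAt_vphi_r (r z t : ℝ) :
    HasDerivAt (fun y => s.vphi y z t) (dr s.vphi r z t) r :=
  (((slice1_contDiff (smooth_vphi' s) z t).differentiable (by simp)) r).hasDerivAt

lemma dr_swirl (r z t : ℝ) : dr s.swirl r z t = s.vphi r z t + r * dr s.vphi r z t := by
  have h3 := (hasDerivAt_id r).mul (hasDerivAt_vphi_r s r z t)
  have h4 := h3.deriv
  simp only [id_eq] at h4
  show deriv (fun y => y * s.vphi y z t) r = _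
  rw [show (fun y => y * s.vphi y z t) = (id * fun y => s.vphi y z t) from rfl, h4]; ring

lemma dzz_swirl (r z t : ℝ) : dz (dz s.swirl) r z t = r * dz (dz s.vphi) r z t := by
  have hfun : (fun y => dz s.swirl r y t) = fun y => r * dz s.vphi r y t :=
    funext fun y => dz_swirl s r y t
  show deriv (fun y => dz s.swirl r y t) z = _
  rw [hfun]
  exact deriv_const_mul_field r

lemma drr_swirl (r z t : ℝ) :
    dr (dr s.swirl) r z t = 2 * dr s.vphi r z t + r * dr (dr s.vphi) r z t := by
  have hfun : (fun y => dr s.swirl y z t) = fun y => s.vphi y z t + y * dr s.vphi y z t :=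
    funext fun y => dr_swirl s y z t
  show deriv (fun y => dr s.swirl y z t) r = _
  rw [hfun]
  have h2 : HasDerivAt (fun y => dr s.vphi y z t) (dr (dr s.vphi) r z t) r :=
    (((slice1_contDiff (contDiff_dr (smooth_vphi' s)) z t).differentiable
      (by simp)) r).hasDerivAt
  have h4 := ((hasDerivAt_vphi_r s r z t).add ((hasDerivAt_id r).mul h2)).deriv
  simp only [id_eq] at h4
  rw [show (fun y => s.vphi y z t + y * dr s.vphi y z t)
    = ((fun y => s.vphi y z t) + id * fun y => dr s.vphi y z t) from rfl, h4]; ring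

lemma swirl_pde (hR : 0 < R) (ha : 0 < a) :
    ∀ r ∈ Ioo 0 R, ∀ z ∈ Icc (-a) a, ∀ t' ∈ Ioo 0 T,
      dt s.swirl r z t' = s.f0 r z t' - s.vr r z t' * dr s.swirl r z t'
        - s.vz r z t' * dz s.swirl r z t' + ν * dr (dr s.swirl) r z t'
        + ν * dz (dz s.swirl) r z t' - (ν / r) * dr s.swirl r z t' := by
  have hopen : ∀ r ∈ Ioo 0 R, ∀ z ∈ Ioo (-a) a, ∀ t' ∈ Ioo 0 T,
      dt s.swirl r z t' = s.f0 r z t' - s.vr r z t' * dr s.swirl r z t'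
        - s.vz r z t' * dz s.swirl r z t' + ν * dr (dr s.swirl) r z t'
        + ν * dz (dz s.swirl) r z t' - (ν / r) * dr s.swirl r z t' := by
    intro r hr z hz t' ht'
    have key := s.eq_vphi r z t' hr hz ht'
    have hr0 : r ≠ 0 := ne_of_gt hr.1
    rw [dt_swirl, dr_swirl, dz_swirl, drr_swirl, dzz_swirl]
    simp only [AxiSol.f0, lapAx] at key ⊢
    field_simp at key ⊢
    have key2 : ((dt s.vphi r z t' + s.vr r z t' * dr s.vphi r z t'
          + s.vz r z t' * dz s.vphi r z t') * r + s.vr r z t' * s.vphi r z t'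
          - ν * (dr (dr s.vphi) r z t' * r + dr s.vphi r z t'
            + dz (dz s.vphi) r z t' * r)) * r + ν * s.vphi r z t'
        = s.fphi r z t' * r ^ 2 := by
      apply mul_right_cancel₀ hr0
      linear_combination r * key
    linear_combination key2
  intro r hr z hz t' ht'
  have hc0 : Continuous (unc s.swirl) := (smooth_swirl s).continuous
  have l2 : Continuous (fun y : ℝ => (r, y, t')) := (line2_contDiff r t').continuous
  have hL : Continuous fun z => dt s.swirl r z t' :=
    (contDiff_dt (smooth_swirl s)).continuous.comp l2
  have hR1 : Continuous fun z => s.f0 r z t' :=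
    (continuous_fst.mul s.smooth_fphi.continuous).comp l2
  have hR2 : Continuous fun z => s.vr r z t' := s.smooth_vr.continuous.comp l2
  have hR3 : Continuous fun z => dr s.swirl r z t' :=
    (contDiff_dr (smooth_swirl s)).continuous.comp l2
  have hR4 : Continuous fun z => s.vz r z t' := s.smooth_vz.continuous.comp l2
  have hR5 : Continuous fun z => dz s.swirl r z t' :=
    (contDiff_dz (smooth_swirl s)).continuous.comp l2
  have hR6 : Continuous fun z => dr (dr s.swirl) r z t' :=
    (contDiff_dr (contDiff_dr (smooth_swirl s))).continuous.comp l2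
  have hR7 : Continuous fun z => dz (dz s.swirl) r z t' :=
    (contDiff_dz (contDiff_dz (smooth_swirl s))).continuous.comp l2
  have hRc : Continuous fun z => s.f0 r z t' - s.vr r z t' * dr s.swirl r z t'
      - s.vz r z t' * dz s.swirl r z t' + ν * dr (dr s.swirl) r z t'
      + ν * dz (dz s.swirl) r z t' - (ν / r) * dr s.swirl r z t' := by
    exact ((((hR1.sub (hR2.mul hR3)).sub (hR4.mul hR5)).add
      (continuous_const.mul hR6)).add (continuous_const.mul hR7)).sub
      (continuous_const.mul hR3)
  have heq : EqOn (fun z => dt s.swirl r z t')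
      (fun z => s.f0 r z t' - s.vr r z t' * dr s.swirl r z t'
        - s.vz r z t' * dz s.swirl r z t' + ν * dr (dr s.swirl) r z t'
        + ν * dz (dz s.swirl) r z t' - (ν / r) * dr s.swirl r z t') (Ioo (-a) a) :=
    fun z hz => hopen r hr z hz t' ht'
  have hcl := heq.closure hL hRc
  have hz' : z ∈ closure (Ioo (-a) a) := by
    rw [closure_Ioo (by linarith : -a ≠ a)]; exact hz
  exact hcl hz'

lemma dr_neg_fun (u : ℝ → ℝ → ℝ → ℝ) :
    dr (fun r z t => -(u r z t)) = fun r z t => -(dr u r z t) := by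
  funext r z t; exact deriv.neg

lemma dz_neg_fun (u : ℝ → ℝ → ℝ → ℝ) :
    dz (fun r z t => -(u r z t)) = fun r z t => -(dz u r z t) := by
  funext r z t; exact deriv.neg

lemma dt_neg_fun (u : ℝ → ℝ → ℝ → ℝ) :
    dt (fun r z t => -(u r z t)) = fun r z t => -(dt u r z t) := by
  funext r z t; exact deriv.neg

end swirlpde

/-- Lemma 2.5, maximum principle for the swirl. For any regular
axially symmetric solution, the swirl `u = r v_φ` satisfies
`|u(t)|_{∞,Ω} ≤ |f₀|_{∞,1,Ω^t} + |u(0)|_{∞,Ω} = D₂`, where `f₀ = r f_φ`. -/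
theorem maximum_principle_swirl (R a ν T : ℝ) (hR : 0 < R) (ha : 0 < a) (hν : 0 < ν)
    (s : AxiSol R a ν T) (t : ℝ) (ht : 0 < t) (htT : t ≤ T) :
    spNorm R a ∞ (fun r z => s.swirl r z t) ≤ s.D2 t := by
  classical
  set box : Set (ℝ × ℝ) := Icc (0:ℝ) R ×ˢ Icc (-a) a with hboxdef
  have hboxc : IsCompact box := isCompact_Icc.prod isCompact_Icc
  have hpt : ((0:ℝ), a) ∈ box := ⟨⟨le_refl 0, hR.le⟩, ⟨by linarith, le_refl a⟩⟩
  have hf0c : Continuous (unc s.f0) := continuous_fst.mul s.smooth_fphi.continuous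
  have huc : Continuous (unc s.swirl) := (smooth_swirl s).continuous
  set Fb : ℝ → ℝ := fun t' => sSup ((fun p : ℝ × ℝ => |s.f0 p.1 p.2 t'|) '' box) with hFbdef
  set M : ℝ := sSup ((fun p : ℝ × ℝ => |s.swirl p.1 p.2 0|) '' box) with hMdef
  have hFbcont : Continuous Fb := by
    apply IsCompact.continuous_sSup hboxc (f := fun t' (p : ℝ × ℝ) => |s.f0 p.1 p.2 t'|)
    exact (hf0c.comp ((continuous_snd.fst).prodMk
      ((continuous_snd.snd).prodMk continuous_fst))).abs
  have hbddF : ∀ t', BddAbove ((fun p : ℝ × ℝ => |s.f0 p.1 p.2 t'|) '' box) := fun t' =>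
    hboxc.bddAbove_image ((hf0c.comp ((continuous_fst).prodMk
      ((continuous_snd).prodMk continuous_const))).abs).continuousOn
  have hFb_ge : ∀ t', ∀ p ∈ box, |s.f0 p.1 p.2 t'| ≤ Fb t' := fun t' p hp =>
    le_csSup (hbddF t') (mem_image_of_mem _ hp)
  have hFb0 : ∀ t', 0 ≤ Fb t' := fun t' =>
    le_trans (abs_nonneg _) (hFb_ge t' _ hpt)
  have hbddM : BddAbove ((fun p : ℝ × ℝ => |s.swirl p.1 p.2 0|) '' box) :=
    hboxc.bddAbove_image ((huc.comp ((continuous_fst).prodMk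
      ((continuous_snd).prodMk continuous_const))).abs).continuousOn
  have hM_ge : ∀ p ∈ box, |s.swirl p.1 p.2 0| ≤ M := fun p hp =>
    le_csSup hbddM (mem_image_of_mem _ hp)
  have hM0 : 0 ≤ M := le_trans (abs_nonneg _) (hM_ge _ hpt)
  -- hypotheses of the core maximum principle for u
  have hinitu : ∀ r ∈ Icc (0:ℝ) R, ∀ z ∈ Icc (-a) a, s.swirl r z 0 ≤ M := fun r hr z hz =>
    le_trans (le_abs_self _) (hM_ge (r, z) ⟨hr, hz⟩)
  have hbc0u : ∀ z ∈ Icc (-a) a, ∀ t' ∈ Ioo 0 T, s.swirl 0 z t' ≤ M := by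
    intro z hz t' ht'
    have : s.swirl 0 z t' = 0 := by simp [AxiSol.swirl]
    linarith
  have hbcRu : ∀ z ∈ Icc (-a) a, ∀ t' ∈ Ioo 0 T, s.swirl R z t' ≤ M := by
    intro z hz t' ht'
    have : s.swirl R z t' = 0 := by simp [AxiSol.swirl, s.bc_vphi z t' hz ht']
    linarith
  have hneuu : ∀ r ∈ Ioo 0 R, ∀ t' ∈ Ioo 0 T,
      dz s.swirl r a t' = 0 ∧ dz s.swirl r (-a) t' = 0 := by
    intro r hr t' ht'
    have h := s.bc_vphiz r t' ⟨hr.1.le, hr.2⟩ ht'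
    constructor
    · rw [dz_swirl, h.1, mul_zero]
    · rw [dz_swirl, h.2, mul_zero]
  have hHu : ∀ r ∈ Ioo 0 R, ∀ z ∈ Icc (-a) a, ∀ t' ∈ Ioo 0 T,
      dr s.swirl r z t' = 0 → dz s.swirl r z t' = 0 →
      dr (dr s.swirl) r z t' ≤ 0 → dz (dz s.swirl) r z t' ≤ 0 →
      dt s.swirl r z t' ≤ Fb t' := by
    intro r hr z hz t' ht' h1 h2 h3 h4
    have heq := swirl_pde s hR ha r hr z hz t' ht'
    rw [h1, h2] at heq
    simp only [mul_zero, sub_zero] at heq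
    have hb := hFb_ge t' (r, z) ⟨⟨hr.1.le, hr.2.le⟩, hz⟩
    have h5 : ν * dr (dr s.swirl) r z t' ≤ 0 := mul_nonpos_of_nonneg_of_nonpos hν.le h3
    have h6 : ν * dz (dz s.swirl) r z t' ≤ 0 := mul_nonpos_of_nonneg_of_nonpos hν.le h4
    have h7 := le_abs_self (s.f0 r z t')
    linarith
  -- hypotheses of the core maximum principle for -u
  have hinitn : ∀ r ∈ Icc (0:ℝ) R, ∀ z ∈ Icc (-a) a, -(s.swirl r z 0) ≤ M := fun r hr z hz =>
    le_trans (neg_le_abs _) (hM_ge (r, z) ⟨hr, hz⟩)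
  have hbc0n : ∀ z ∈ Icc (-a) a, ∀ t' ∈ Ioo 0 T, -(s.swirl 0 z t') ≤ M := by
    intro z hz t' ht'
    have : s.swirl 0 z t' = 0 := by simp [AxiSol.swirl]
    rw [this]; simpa using hM0
  have hbcRn : ∀ z ∈ Icc (-a) a, ∀ t' ∈ Ioo 0 T, -(s.swirl R z t') ≤ M := by
    intro z hz t' ht'
    have : s.swirl R z t' = 0 := by simp [AxiSol.swirl, s.bc_vphi z t' hz ht']
    rw [this]; simpa using hM0
  have hneun : ∀ r ∈ Ioo 0 R, ∀ t' ∈ Ioo 0 T,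
      dz (fun r z t => -(s.swirl r z t)) r a t' = 0 ∧
      dz (fun r z t => -(s.swirl r z t)) r (-a) t' = 0 := by
    intro r hr t' ht'
    have h := hneuu r hr t' ht'
    simp only [dz_neg_fun]
    exact ⟨by rw [h.1, neg_zero], by rw [h.2, neg_zero]⟩
  have hHn : ∀ r ∈ Ioo 0 R, ∀ z ∈ Icc (-a) a, ∀ t' ∈ Ioo 0 T,
      dr (fun r z t => -(s.swirl r z t)) r z t' = 0 →
      dz (fun r z t => -(s.swirl r z t)) r z t' = 0 →
      dr (dr (fun r z t => -(s.swirl r z t))) r z t' ≤ 0 →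
      dz (dz (fun r z t => -(s.swirl r z t))) r z t' ≤ 0 →
      dt (fun r z t => -(s.swirl r z t)) r z t' ≤ Fb t' := by
    intro r hr z hz t' ht' h1 h2 h3 h4
    simp only [dr_neg_fun, neg_eq_zero] at h1
    simp only [dz_neg_fun, neg_eq_zero] at h2
    simp only [dr_neg_fun, neg_nonpos] at h3
    simp only [dz_neg_fun, neg_nonpos] at h4
    simp only [dt_neg_fun]
    have heq := swirl_pde s hR ha r hr z hz t' ht'
    rw [h1, h2] at heq
    simp only [mul_zero, sub_zero] at heq
    have hb := hFb_ge t' (r, z) ⟨⟨hr.1.le, hr.2.le⟩, hz⟩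
    have h5 : 0 ≤ ν * dr (dr s.swirl) r z t' := mul_nonneg hν.le h3
    have h6 : 0 ≤ ν * dz (dz s.swirl) r z t' := mul_nonneg hν.le h4
    have h7 := neg_abs_le (s.f0 r z t')
    linarith
  -- pointwise bound at time t
  have hptwise : ∀ p ∈ box, |s.swirl p.1 p.2 t| ≤ M + ∫ x in (0:ℝ)..t, Fb x := by
    intro p hp
    have hcore : ∀ t₁ ∈ Ioo 0 t, |s.swirl p.1 p.2 t₁| ≤ M + ∫ x in (0:ℝ)..t₁, Fb x := by
      intro t₁ ht₁
      have ht₁T : t₁ < T := lt_of_lt_of_le ht₁.2 htT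
      have hpos := core_max_principle R a T hR ha s.swirl (smooth_swirl s) Fb hFbcont hFb0
        M hM0 hinitu hbc0u hbcRu hneuu hHu t₁ ht₁.1 ht₁T p.1 hp.1 p.2 hp.2
      have hneg := core_max_principle R a T hR ha (fun r z t => -(s.swirl r z t))
        ((smooth_swirl s).neg) Fb hFbcont hFb0 M hM0 hinitn hbc0n hbcRn hneun hHn
        t₁ ht₁.1 ht₁T p.1 hp.1 p.2 hp.2
      have hneg' : -s.swirl p.1 p.2 t₁ ≤ M + ∫ x in (0:ℝ)..t₁, Fb x := hneg
      rw [abs_le]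
      exact ⟨by linarith, hpos⟩
    have hPd : ∀ s', HasDerivAt (fun y => ∫ x in (0:ℝ)..y, Fb x) (Fb s') s' := fun s' =>
      intervalIntegral.integral_hasDerivAt_right (hFbcont.intervalIntegrable _ _)
        hFbcont.stronglyMeasurable.stronglyMeasurableAtFilter hFbcont.continuousAt
    have hPc : Continuous fun y => ∫ x in (0:ℝ)..y, Fb x := by
      rw [continuous_iff_continuousAt]; exact fun s' => (hPd s').continuousAt
    have hc1 : Continuous fun t₁ => |s.swirl p.1 p.2 t₁| :=
      ((slice3_contDiff (smooth_swirl s) p.1 p.2).continuous).abs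
    have hc2 : Continuous fun t₁ => M + ∫ x in (0:ℝ)..t₁, Fb x := continuous_const.add hPc
    have hev : ∀ᶠ t₁ in 𝓝[<] t, |s.swirl p.1 p.2 t₁| ≤ M + ∫ x in (0:ℝ)..t₁, Fb x := by
      filter_upwards [Ioo_mem_nhdsLT ht] with t₁ ht₁ using hcore t₁ ht₁
    exact le_of_tendsto_of_tendsto (hc1.continuousAt.tendsto.mono_left nhdsWithin_le_nhds)
      (hc2.continuousAt.tendsto.mono_left nhdsWithin_le_nhds) hev
  -- from the pointwise bound to the L∞ bound
  have hInt0 : 0 ≤ ∫ x in (0:ℝ)..t, Fb x :=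
    intervalIntegral.integral_nonneg ht.le fun s' _ => hFb0 s'
  have hmain : spNorm R a ∞ (fun r z => s.swirl r z t) ≤ M + ∫ x in (0:ℝ)..t, Fb x := by
    apply spNorm_top_le (by linarith)
    intro x hx
    exact hptwise x ((Set.prod_mono Ioo_subset_Icc_self Ioo_subset_Icc_self) hx)
  -- M is at most the L∞ norm of u(0)
  have hucont0 : Continuous fun x : ℝ × ℝ => s.swirl x.1 x.2 0 :=
    huc.comp ((continuous_fst).prodMk ((continuous_snd).prodMk continuous_const))
  have hMle : M ≤ spNorm R a ∞ (fun r z => s.swirl r z 0) := by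
    apply Real.sSup_le
    · rintro y ⟨p, hp, rfl⟩
      exact abs_le_spNorm_top hR ha (g := fun r z => s.swirl r z 0) hucont0 hp
    · exact ENNReal.toReal_nonneg
  -- the integral of Fb is the mixed norm of f₀
  have hGeq : (fun t' => spNorm R a ∞ fun r z => s.f0 r z t') = Fb := by
    funext t'
    have hf0slice : Continuous fun x : ℝ × ℝ => s.f0 x.1 x.2 t' :=
      hf0c.comp ((continuous_fst).prodMk ((continuous_snd).prodMk continuous_const))
    apply le_antisymm
    · exact spNorm_top_le (hFb0 t') fun x hx =>
        hFb_ge t' x ((Set.prod_mono Ioo_subset_Icc_self Ioo_subset_Icc_self) hx)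
    · apply Real.sSup_le
      · rintro y ⟨p, hp, rfl⟩
        exact abs_le_spNorm_top hR ha (g := fun r z => s.f0 r z t') hf0slice hp
      · exact ENNReal.toReal_nonneg
  have hmix : mixNorm R a ∞ 1 t s.f0 = ∫ x in (0:ℝ)..t, Fb x := by
    rw [intervalIntegral.integral_of_le ht.le, MeasureTheory.integral_Ioc_eq_integral_Ioo]
    have h1 : ∫ x in Ioo (0:ℝ) t, Fb x
        = (∫⁻ x in Ioo (0:ℝ) t, ENNReal.ofReal (Fb x)).toReal :=
      integral_eq_lintegral_of_nonneg_ae (Filter.Eventually.of_forall fun x => hFb0 x)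
        hFbcont.aestronglyMeasurable.restrict
    rw [h1]
    simp only [mixNorm, hGeq, eLpNorm_one_eq_lintegral_enorm]
    congr 1
    apply lintegral_congr
    intro x
    rw [Real.enorm_eq_ofReal_abs, abs_of_nonneg (hFb0 x)]
  have hD2 : s.D2 t = mixNorm R a ∞ 1 t s.f0 + spNorm R a ∞ (fun r z => s.swirl r z 0) := rfl
  rw [hD2, hmix]
  linarith

end
end
end

section
/- First H³ elliptic estimate for the modified stream function (Lemma 4.2, estimate (4.7)): There is a universal constant c > 0 such that every sufficiently regular solution ψ₁ of the modified stream-function problem satisfies ∫_Ω (ψ₁,zzr² + ψ₁,zzz²) dx + ∫_{−a}^{a} (∂_z²ψ₁)²|_{r=0} dz ≤ c |∂_zΓ|²_{2,Ω}. -/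
/-!
Common setup: axially symmetric functions on the finite cylinder
`Ω = {x ∈ ℝ³ : x₁² + x₂² < R², |x₃| < a}` are represented in cylindrical
coordinates as functions `u = u(r, z, t)`.  Integration over `Ω` of an
axisymmetric function is integration over `(0,R) × (-a,a)` with respect to
the weighted measure `r dr dz` (the angular factor `2π` is immaterial and
omitted).
-/

open MeasureTheory Set ENNReal

noncomputable section

namespace Helper

variable {u : ℝ → ℝ → ℝ}

theorem hasDerivAt_fst (h : Differentiable ℝ (fun x : ℝ × ℝ => u x.1 x.2)) (r z : ℝ) :
    HasDerivAt (fun y => u y z) (fderiv ℝ (fun x : ℝ × ℝ => u x.1 x.2) (r, z) (1, 0)) r :=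
  by have := (h (r, z)).hasFDerivAt.comp_hasDerivAt r ((hasDerivAt_id r).prodMk (hasDerivAt_const r z)); exact this

theorem hasDerivAt_snd (h : Differentiable ℝ (fun x : ℝ × ℝ => u x.1 x.2)) (r z : ℝ) :
    HasDerivAt (fun y => u r y) (fderiv ℝ (fun x : ℝ × ℝ => u x.1 x.2) (r, z) (0, 1)) z :=
  (h (r, z)).hasFDerivAt.comp_hasDerivAt z ((hasDerivAt_const z r).prodMk (hasDerivAt_id z))

theorem pr_eq (h : Differentiable ℝ (fun x : ℝ × ℝ => u x.1 x.2)) (r z : ℝ) :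
    pr u r z = fderiv ℝ (fun x : ℝ × ℝ => u x.1 x.2) (r, z) (1, 0) :=
  (hasDerivAt_fst h r z).deriv

theorem pz_eq (h : Differentiable ℝ (fun x : ℝ × ℝ => u x.1 x.2)) (r z : ℝ) :
    pz u r z = fderiv ℝ (fun x : ℝ × ℝ => u x.1 x.2) (r, z) (0, 1) :=
  (hasDerivAt_snd h r z).deriv

theorem hasDerivAt_pr (h : ContDiff ℝ (⊤ : ℕ∞) (fun x : ℝ × ℝ => u x.1 x.2)) (r z : ℝ) :
    HasDerivAt (fun y => u y z) (pr u r z) r := by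
  have hd := h.differentiable (by simp)
  rw [pr_eq hd]; exact hasDerivAt_fst hd r z

theorem hasDerivAt_pz (h : ContDiff ℝ (⊤ : ℕ∞) (fun x : ℝ × ℝ => u x.1 x.2)) (r z : ℝ) :
    HasDerivAt (fun y => u r y) (pz u r z) z := by
  have hd := h.differentiable (by simp)
  rw [pz_eq hd]; exact hasDerivAt_snd hd r z

theorem contDiff_pr (h : ContDiff ℝ (⊤ : ℕ∞) (fun x : ℝ × ℝ => u x.1 x.2)) :
    ContDiff ℝ (⊤ : ℕ∞) (fun x : ℝ × ℝ => pr u x.1 x.2) := by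
  have : (fun x : ℝ × ℝ => pr u x.1 x.2)
      = fun x : ℝ × ℝ => fderiv ℝ (fun x : ℝ × ℝ => u x.1 x.2) x ((1 : ℝ), (0 : ℝ)) := by
    funext x
    exact pr_eq (h.differentiable (by simp)) x.1 x.2
  rw [this]
  exact (h.fderiv_right (by exact_mod_cast le_top)).clm_apply contDiff_const

theorem contDiff_pz (h : ContDiff ℝ (⊤ : ℕ∞) (fun x : ℝ × ℝ => u x.1 x.2)) :
    ContDiff ℝ (⊤ : ℕ∞) (fun x : ℝ × ℝ => pz u x.1 x.2) := by
  have : (fun x : ℝ × ℝ => pz u x.1 x.2)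
      = fun x : ℝ × ℝ => fderiv ℝ (fun x : ℝ × ℝ => u x.1 x.2) x ((0 : ℝ), (1 : ℝ)) := by
    funext x
    exact pz_eq (h.differentiable (by simp)) x.1 x.2
  rw [this]
  exact (h.fderiv_right (by exact_mod_cast le_top)).clm_apply contDiff_const

theorem pz_pr_comm (h : ContDiff ℝ (⊤ : ℕ∞) (fun x : ℝ × ℝ => u x.1 x.2)) :
    pz (pr u) = pr (pz u) := by
  set F : ℝ × ℝ → ℝ := fun x => u x.1 x.2 with hF
  have hdF : Differentiable ℝ F := h.differentiable (by simp)
  have hf' : ContDiff ℝ (⊤ : ℕ∞) (fderiv ℝ F) := h.fderiv_right (by exact_mod_cast le_top)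
  funext r z
  have hsymm := second_derivative_symmetric (f := F) (f' := fderiv ℝ F)
    (f'' := fderiv ℝ (fderiv ℝ F) (r, z)) (fun y => (hdF y).hasFDerivAt)
    ((hf'.differentiable (by simp) (r, z)).hasFDerivAt)
  have e1 : pz (pr u) r z = fderiv ℝ (fderiv ℝ F) (r, z) ((0:ℝ),(1:ℝ)) ((1:ℝ),(0:ℝ)) := by
    rw [pz_eq ((contDiff_pr h).differentiable (by simp)) r z]
    have h2 : (fun x : ℝ × ℝ => pr u x.1 x.2)
        = fun x : ℝ × ℝ => fderiv ℝ F x ((1 : ℝ), (0 : ℝ)) := by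
      funext x; exact pr_eq hdF x.1 x.2
    rw [h2]
    have hh : HasFDerivAt (fun x : ℝ × ℝ => fderiv ℝ F x ((1 : ℝ), (0 : ℝ)))
        (((ContinuousLinearMap.apply ℝ ℝ ((1:ℝ),(0:ℝ))).comp
          (fderiv ℝ (fderiv ℝ F) (r, z)))) (r, z) :=
      (ContinuousLinearMap.apply ℝ ℝ ((1:ℝ),(0:ℝ))).hasFDerivAt.comp (r, z)
        ((hf'.differentiable (by simp) (r, z)).hasFDerivAt)
    simp [hh.fderiv]
  have e2 : pr (pz u) r z = fderiv ℝ (fderiv ℝ F) (r, z) ((1:ℝ),(0:ℝ)) ((0:ℝ),(1:ℝ)) := by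
    rw [pr_eq ((contDiff_pz h).differentiable (by simp)) r z]
    have h2 : (fun x : ℝ × ℝ => pz u x.1 x.2)
        = fun x : ℝ × ℝ => fderiv ℝ F x ((0 : ℝ), (1 : ℝ)) := by
      funext x; exact pz_eq hdF x.1 x.2
    rw [h2]
    have hh : HasFDerivAt (fun x : ℝ × ℝ => fderiv ℝ F x ((0 : ℝ), (1 : ℝ)))
        (((ContinuousLinearMap.apply ℝ ℝ ((0:ℝ),(1:ℝ))).comp
          (fderiv ℝ (fderiv ℝ F) (r, z)))) (r, z) :=
      (ContinuousLinearMap.apply ℝ ℝ ((0:ℝ),(1:ℝ))).hasFDerivAt.comp (r, z)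
        ((hf'.differentiable (by simp) (r, z)).hasFDerivAt)
    simp [hh.fderiv]
  rw [e1, e2, hsymm]

theorem integral_cyl (R a : ℝ) (f : ℝ × ℝ → ℝ) :
    ∫ x, f x ∂(cylMeasure R a) = ∫ x in Ioo 0 R ×ˢ Ioo (-a) a, x.1 * f x := by
  rw [cylMeasure]
  have hmeas : Measurable fun x : ℝ × ℝ => Real.toNNReal x.1 :=
    measurable_fst.real_toNNReal
  have hd : (fun x : ℝ × ℝ => ENNReal.ofReal x.1)
      = fun x : ℝ × ℝ => ((Real.toNNReal x.1 : NNReal) : ℝ≥0∞) := rfl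
  rw [hd, integral_withDensity_eq_integral_smul hmeas]
  apply setIntegral_congr_fun (measurableSet_Ioo.prod measurableSet_Ioo)
  intro x hx
  have hx1 : (0:ℝ) ≤ x.1 := le_of_lt hx.1.1
  simp [NNReal.smul_def, Real.coe_toNNReal _ hx1]

theorem integrable_cyl_iff (R a : ℝ) (f : ℝ × ℝ → ℝ) :
    Integrable f (cylMeasure R a) ↔
      Integrable (fun x : ℝ × ℝ => Real.toNNReal x.1 • f x)
        (volume.restrict (Ioo 0 R ×ˢ Ioo (-a) a)) := by
  rw [cylMeasure]
  exact integrable_withDensity_iff_integrable_smul measurable_fst.real_toNNReal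

theorem integrableOn_rect {R a : ℝ} {f : ℝ × ℝ → ℝ} (hf : Continuous f) :
    IntegrableOn f (Ioo 0 R ×ˢ Ioo (-a) a) volume := by
  refine (hf.continuousOn.integrableOn_compact
    ((isCompact_Icc (a := (0:ℝ)) (b := R)).prod
      (isCompact_Icc (a := -a) (b := a)))).mono_set ?_
  exact Set.prod_mono Ioo_subset_Icc_self Ioo_subset_Icc_self

theorem deriv_zero_on_open {f : ℝ → ℝ} {t : Set ℝ} (ht : IsOpen t)
    (hf : ∀ y ∈ t, f y = 0) : ∀ y ∈ t, deriv f y = 0 := by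
  intro y hy
  have hev : f =ᶠ[nhds y] fun _ => 0 := by
    filter_upwards [ht.mem_nhds hy] with x hx using hf x hx
  rw [hev.deriv_eq, deriv_const]

theorem continuous_of_contDiff {f : ℝ × ℝ → ℝ} (h : ContDiff ℝ (⊤ : ℕ∞) f) :
    Continuous f := h.continuous

end Helper

open Helper

/-- Lemma 4.2, estimate (4.7): first `H³` elliptic estimate for
the modified stream function `ψ₁`. -/
theorem H3_elliptic_estimate_psi1_first :
    ∃ c : ℝ, 0 < c ∧
      ∀ (R a : ℝ), 0 < R → 0 < a → ∀ (ψ₁ Γ : ℝ → ℝ → ℝ),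
        (ContDiff ℝ (⊤ : ℕ∞) fun x : ℝ × ℝ => ψ₁ x.1 x.2) →
        (ContDiff ℝ (⊤ : ℕ∞) fun x : ℝ × ℝ => Γ x.1 x.2) →
        (∀ r z, r ∈ Ioo 0 R → z ∈ Ioo (-a) a →
          -(pr (pr ψ₁) r z + 1 / r * pr ψ₁ r z + pz (pz ψ₁) r z) - 2 / r * pr ψ₁ r z = Γ r z) →
        (∀ z, z ∈ Icc (-a) a → ψ₁ R z = 0) →
        (∀ r, r ∈ Icc 0 R → ψ₁ r a = 0 ∧ ψ₁ r (-a) = 0) →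
        (∀ z, z ∈ Icc (-a) a → pr ψ₁ 0 z = 0) →
        (∀ r, r ∈ Ico 0 R → Γ r a = 0 ∧ Γ r (-a) = 0) →
        (∀ r, r ∈ Ico 0 R → pz (pz ψ₁) r a = 0 ∧ pz (pz ψ₁) r (-a) = 0) →
        (∀ z, z ∈ Icc (-a) a → pr (pz (pz ψ₁)) 0 z = 0) →
        (∫ x, (pr (pz (pz ψ₁)) x.1 x.2 ^ 2 + pz (pz (pz ψ₁)) x.1 x.2 ^ 2) ∂(cylMeasure R a))
          + (∫ z in Ioo (-a) a, pz (pz ψ₁) 0 z ^ 2)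
          ≤ c * spNorm R a 2 (pz Γ) ^ 2 := by
  refine ⟨1, one_pos, ?_⟩
  intro R a hR ha ψ Γ hψ hΓ hpde hbcR hbcz haxis hΓbc hwbc hwaxis
  -- notation
  set s : Set ℝ := Ioo (0:ℝ) R with hs
  set t : Set ℝ := Ioo (-a) a with ht
  set U : Set (ℝ × ℝ) := s ×ˢ t with hU
  set w : ℝ → ℝ → ℝ := pz (pz ψ) with hw
  -- smoothness of everything
  have hψw : ContDiff ℝ (⊤ : ℕ∞) fun x : ℝ × ℝ => w x.1 x.2 := contDiff_pz (contDiff_pz hψ)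
  have hprw : ContDiff ℝ (⊤ : ℕ∞) fun x : ℝ × ℝ => pr w x.1 x.2 := contDiff_pr hψw
  have hpzw : ContDiff ℝ (⊤ : ℕ∞) fun x : ℝ × ℝ => pz w x.1 x.2 := contDiff_pz hψw
  have hprprw : ContDiff ℝ (⊤ : ℕ∞) fun x : ℝ × ℝ => pr (pr w) x.1 x.2 := contDiff_pr hprw
  have hpzpzw : ContDiff ℝ (⊤ : ℕ∞) fun x : ℝ × ℝ => pz (pz w) x.1 x.2 := contDiff_pz hpzw
  have hpzΓ : ContDiff ℝ (⊤ : ℕ∞) fun x : ℝ × ℝ => pz Γ x.1 x.2 := contDiff_pz hΓ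
  have hpzpzΓ : ContDiff ℝ (⊤ : ℕ∞) fun x : ℝ × ℝ => pz (pz Γ) x.1 x.2 := contDiff_pz hpzΓ
  -- Step A: derived PDE for w
  have hw_pde : ∀ r z, r ∈ s → z ∈ t →
      pr (pr w) r z + 3 / r * pr w r z + pz (pz w) r z + pz (pz Γ) r z = 0 := by
    have hE : ∀ r z, r ∈ s → z ∈ t →
        pr (pr ψ) r z + 3 / r * pr ψ r z + pz (pz ψ) r z + Γ r z = 0 := by
      intro r z hr hz
      have h := hpde r z hr hz
      have hr0 : r ≠ 0 := ne_of_gt hr.1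
      rw [← hw]
      field_simp at h ⊢
      linarith
    have hE1 : ∀ r z, r ∈ s → z ∈ t →
        pz (pr (pr ψ)) r z + 3 / r * pz (pr ψ) r z + pz (pz (pz ψ)) r z + pz Γ r z = 0 := by
      intro r z hr hz
      have hd : HasDerivAt
          (fun y => pr (pr ψ) r y + 3 / r * pr ψ r y + pz (pz ψ) r y + Γ r y)
          (pz (pr (pr ψ)) r z + 3 / r * pz (pr ψ) r z + pz (pz (pz ψ)) r z + pz Γ r z) z :=
        (((hasDerivAt_pz (contDiff_pr (contDiff_pr hψ)) r z).add
          ((hasDerivAt_pz (contDiff_pr hψ) r z).const_mul (3 / r))).add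
          (hasDerivAt_pz (contDiff_pz (contDiff_pz hψ)) r z)).add (hasDerivAt_pz hΓ r z)
      have hzero : HasDerivAt (fun _ : ℝ => (0:ℝ))
          (pz (pr (pr ψ)) r z + 3 / r * pz (pr ψ) r z + pz (pz (pz ψ)) r z + pz Γ r z) z := by
        apply hd.congr_of_eventuallyEq
        filter_upwards [isOpen_Ioo.mem_nhds hz] with y hy
        exact (hE r y hr hy).symm
      exact (hzero.unique (hasDerivAt_const z 0)).symm ▸ (hzero.unique (hasDerivAt_const z 0))
    have hE2 : ∀ r z, r ∈ s → z ∈ t →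
        pz (pz (pr (pr ψ))) r z + 3 / r * pz (pz (pr ψ)) r z + pz (pz (pz (pz ψ))) r z
          + pz (pz Γ) r z = 0 := by
      intro r z hr hz
      have hd : HasDerivAt
          (fun y => pz (pr (pr ψ)) r y + 3 / r * pz (pr ψ) r y + pz (pz (pz ψ)) r y + pz Γ r y)
          (pz (pz (pr (pr ψ))) r z + 3 / r * pz (pz (pr ψ)) r z + pz (pz (pz (pz ψ))) r z
            + pz (pz Γ) r z) z :=
        (((hasDerivAt_pz (contDiff_pz (contDiff_pr (contDiff_pr hψ))) r z).add
          ((hasDerivAt_pz (contDiff_pz (contDiff_pr hψ)) r z).const_mul (3 / r))).add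
          (hasDerivAt_pz (contDiff_pz (contDiff_pz (contDiff_pz hψ))) r z)).add
          (hasDerivAt_pz (contDiff_pz hΓ) r z)
      have hzero : HasDerivAt (fun _ : ℝ => (0:ℝ))
          (pz (pz (pr (pr ψ))) r z + 3 / r * pz (pz (pr ψ)) r z + pz (pz (pz (pz ψ))) r z
            + pz (pz Γ) r z) z := by
        apply hd.congr_of_eventuallyEq
        filter_upwards [isOpen_Ioo.mem_nhds hz] with y hy
        exact (hE1 r y hr hy).symm
      exact (hzero.unique (hasDerivAt_const z 0)).symm ▸ (hzero.unique (hasDerivAt_const z 0))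
    have c1 : pz (pr ψ) = pr (pz ψ) := pz_pr_comm hψ
    have c2 : pz (pr (pr ψ)) = pr (pr (pz ψ)) := by
      rw [pz_pr_comm (contDiff_pr hψ), c1]
    have c3 : pz (pz (pr ψ)) = pr (pz (pz ψ)) := by
      rw [c1, pz_pr_comm (contDiff_pz hψ)]
    have c4 : pz (pz (pr (pr ψ))) = pr (pr (pz (pz ψ))) := by
      rw [c2, pz_pr_comm (contDiff_pr (contDiff_pz hψ)), pz_pr_comm (contDiff_pz hψ)]
    intro r z hr hz
    have h := hE2 r z hr hz
    rw [c4, c3, ← hw] at h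
    exact h
  -- the flux functions
  set P : ℝ → ℝ → ℝ := fun r z => r * w r z * pr w r z + w r z * w r z with hP
  set Q : ℝ → ℝ → ℝ := fun r z => r * w r z * (pz w r z + pz Γ r z) with hQ
  have hPs : ContDiff ℝ (⊤ : ℕ∞) fun x : ℝ × ℝ => P x.1 x.2 := by
    exact ((contDiff_fst.mul hψw).mul hprw).add (hψw.mul hψw)
  have hQs : ContDiff ℝ (⊤ : ℕ∞) fun x : ℝ × ℝ => Q x.1 x.2 := by
    exact (contDiff_fst.mul hψw).mul (hpzw.add hpzΓ)
  -- Step B: pointwise divergence identity on U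
  have hdiv : ∀ x : ℝ × ℝ, x ∈ U →
      pr P x.1 x.2 + pz Q x.1 x.2
        = x.1 * (pr w x.1 x.2 ^ 2 + pz w x.1 x.2 ^ 2)
          + x.1 * (pz w x.1 x.2 * pz Γ x.1 x.2) := by
    rintro ⟨r, z⟩ ⟨hr, hz⟩
    have hr0 : (r:ℝ) ≠ 0 := ne_of_gt hr.1
    have hdP : HasDerivAt (fun y => P y z)
        (((1 * w r z + r * pr w r z) * pr w r z + r * w r z * pr (pr w) r z)
          + (pr w r z * w r z + w r z * pr w r z)) r :=
      (((hasDerivAt_id r).mul (hasDerivAt_pr hψw r z)).mul (hasDerivAt_pr hprw r z)).add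
        ((hasDerivAt_pr hψw r z).mul (hasDerivAt_pr hψw r z))
    have hdQ : HasDerivAt (fun y => Q r y)
        ((0 * w r z + r * pz w r z) * (pz w r z + pz Γ r z)
          + r * w r z * (pz (pz w) r z + pz (pz Γ) r z)) z :=
      (((hasDerivAt_const z r).mul (hasDerivAt_pz hψw r z)).mul
        ((hasDerivAt_pz hpzw r z).add (hasDerivAt_pz hpzΓ r z)))
    have key := hw_pde r z hr hz
    have key' : r * pr (pr w) r z + 3 * pr w r z + r * pz (pz w) r z
        + r * pz (pz Γ) r z = 0 := by
      field_simp at key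
      linarith
    show pr P r z + pz Q r z = _
    rw [show pr P r z = deriv (fun y => P y z) r from rfl, hdP.deriv,
        show pz Q r z = deriv (fun y => Q r y) z from rfl, hdQ.deriv]
    linear_combination (w r z) * key'
  -- Step C: integral of divergence = boundary terms
  have hUmeas : MeasurableSet U := measurableSet_Ioo.prod measurableSet_Ioo
  have hwR : ∀ z ∈ t, w R z = 0 := by
    have h0 : ∀ y ∈ t, ψ R y = 0 := fun y hy => hbcR y (Ioo_subset_Icc_self hy)
    have h1 : ∀ y ∈ t, pz ψ R y = 0 := deriv_zero_on_open isOpen_Ioo h0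
    exact deriv_zero_on_open isOpen_Ioo h1
  have hIP : ∫ x in U, pr P x.1 x.2 = - ∫ z in t, w 0 z ^ 2 := by
    have hint : IntegrableOn (fun x : ℝ × ℝ => pr P x.1 x.2) U volume :=
      integrableOn_rect (contDiff_pr hPs).continuous
    have hint' : Integrable (fun x : ℝ × ℝ => pr P x.1 x.2)
        ((volume.restrict s).prod (volume.restrict t)) := by
      rw [Measure.prod_restrict, ← Measure.volume_eq_prod]
      exact hint
    have hfub : ∫ x in U, pr P x.1 x.2 = ∫ z in t, ∫ r in s, pr P r z := by
      rw [hU, show (volume : Measure (ℝ × ℝ)) = (volume : Measure ℝ).prod volume from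
        Measure.volume_eq_prod ℝ ℝ, ← Measure.prod_restrict]
      exact integral_prod_symm _ hint'
    have hftc : ∀ z : ℝ, ∫ r in s, pr P r z = P R z - P 0 z := by
      intro z
      rw [hs, ← integral_Ioc_eq_integral_Ioo, ← intervalIntegral.integral_of_le hR.le]
      exact intervalIntegral.integral_deriv_eq_sub
        (fun x _ => (hasDerivAt_pr hPs x z).differentiableAt)
        (((contDiff_pr hPs).continuous.comp
          (continuous_id.prodMk continuous_const)).intervalIntegrable 0 R)
    rw [hfub]
    simp only [hftc]
    rw [← integral_neg]
    apply setIntegral_congr_fun measurableSet_Ioo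
    intro z hz
    have h1 : w R z = 0 := hwR z hz
    simp only [hP, h1]
    ring
  have hIQ : ∫ x in U, pz Q x.1 x.2 = 0 := by
    have hint : IntegrableOn (fun x : ℝ × ℝ => pz Q x.1 x.2) U volume :=
      integrableOn_rect (contDiff_pz hQs).continuous
    have hint' : Integrable (fun x : ℝ × ℝ => pz Q x.1 x.2)
        ((volume.restrict s).prod (volume.restrict t)) := by
      rw [Measure.prod_restrict, ← Measure.volume_eq_prod]
      exact hint
    have hfub : ∫ x in U, pz Q x.1 x.2 = ∫ r in s, ∫ z in t, pz Q r z := by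
      rw [hU, show (volume : Measure (ℝ × ℝ)) = (volume : Measure ℝ).prod volume from
        Measure.volume_eq_prod ℝ ℝ, ← Measure.prod_restrict]
      exact integral_prod _ hint'
    have hftc : ∀ r : ℝ, ∫ z in t, pz Q r z = Q r a - Q r (-a) := by
      intro r
      rw [ht, ← integral_Ioc_eq_integral_Ioo,
        ← intervalIntegral.integral_of_le (by linarith : -a ≤ a)]
      exact intervalIntegral.integral_deriv_eq_sub
        (fun x _ => (hasDerivAt_pz hQs r x).differentiableAt)
        (((contDiff_pz hQs).continuous.comp
          (continuous_const.prodMk continuous_id)).intervalIntegrable (-a) a)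
    rw [hfub]
    simp only [hftc]
    rw [show (0:ℝ) = ∫ _ in s, (0:ℝ) by simp]
    apply setIntegral_congr_fun measurableSet_Ioo
    intro r hr
    have h1 : w r a = 0 := (hwbc r ⟨hr.1.le, hr.2⟩).1
    have h2 : w r (-a) = 0 := (hwbc r ⟨hr.1.le, hr.2⟩).2
    simp only [hQ, h1, h2]
    ring
  -- abbreviations for the integrals
  set Ivol : ℝ := ∫ x in U, x.1 * (pr w x.1 x.2 ^ 2 + pz w x.1 x.2 ^ 2) with hIvol
  set Jvol : ℝ := ∫ x in U, x.1 * (pz w x.1 x.2 * pz Γ x.1 x.2) with hJvol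
  set Kvol : ℝ := ∫ x in U, x.1 * pz w x.1 x.2 ^ 2 with hKvol
  set Nvol : ℝ := ∫ x in U, x.1 * pz Γ x.1 x.2 ^ 2 with hNvol
  set B : ℝ := ∫ z in t, w 0 z ^ 2 with hB
  have hintI : IntegrableOn (fun x : ℝ × ℝ => x.1 * (pr w x.1 x.2 ^ 2 + pz w x.1 x.2 ^ 2)) U volume := by
    apply integrableOn_rect
    exact continuous_fst.mul (((hprw.continuous.mul hprw.continuous).add
      (hpzw.continuous.mul hpzw.continuous)).congr (by intro x; simp only [Pi.mul_apply, Pi.add_apply, Pi.pow_apply]; ring))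
  have hintJ : IntegrableOn (fun x : ℝ × ℝ => x.1 * (pz w x.1 x.2 * pz Γ x.1 x.2)) U volume := by
    apply integrableOn_rect
    exact continuous_fst.mul (hpzw.continuous.mul hpzΓ.continuous)
  have hintK : IntegrableOn (fun x : ℝ × ℝ => x.1 * pz w x.1 x.2 ^ 2) U volume := by
    apply integrableOn_rect
    exact continuous_fst.mul ((hpzw.continuous.mul hpzw.continuous).congr (by intro x; simp only [Pi.mul_apply, Pi.add_apply, Pi.pow_apply]; ring))
  have hintN : IntegrableOn (fun x : ℝ × ℝ => x.1 * pz Γ x.1 x.2 ^ 2) U volume := by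
    apply integrableOn_rect
    exact continuous_fst.mul ((hpzΓ.continuous.mul hpzΓ.continuous).congr (by intro x; simp only [Pi.mul_apply, Pi.add_apply, Pi.pow_apply]; ring))
  -- main identity : Ivol + Jvol = -B
  have hmain : Ivol + Jvol = -B := by
    have hsum : ∫ x in U, (pr P x.1 x.2 + pz Q x.1 x.2) = Ivol + Jvol := by
      rw [setIntegral_congr_fun hUmeas hdiv]
      exact integral_add hintI hintJ
    have hsplit : ∫ x in U, (pr P x.1 x.2 + pz Q x.1 x.2) = (- ∫ z in t, w 0 z ^ 2) + 0 := by
      rw [integral_add (integrableOn_rect (contDiff_pr hPs).continuous)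
        (integrableOn_rect (contDiff_pz hQs).continuous), hIP, hIQ]
    rw [hB]
    rw [hsum] at hsplit
    linarith
  -- inequalities
  have hKI : Kvol ≤ Ivol := by
    apply setIntegral_mono_on hintK hintI hUmeas
    intro x hx
    nlinarith [mul_nonneg hx.1.1.le (sq_nonneg (pr w x.1 x.2))]
  have hJKN : -(2 * Jvol) ≤ Kvol + Nvol := by
    have hmono : ∫ x in U, (-2) * (x.1 * (pz w x.1 x.2 * pz Γ x.1 x.2))
        ≤ ∫ x in U, (x.1 * pz w x.1 x.2 ^ 2 + x.1 * pz Γ x.1 x.2 ^ 2) := by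
      apply setIntegral_mono_on (hintJ.const_mul (-2)) (hintK.add hintN) hUmeas
      intro x hx
      simp only [Pi.add_apply]
      nlinarith [mul_nonneg hx.1.1.le (sq_nonneg (pz w x.1 x.2 + pz Γ x.1 x.2))]
    rw [integral_const_mul, integral_add hintK hintN] at hmono
    linarith
  have hBpos : 0 ≤ B := by
    apply setIntegral_nonneg measurableSet_Ioo
    intro z _; positivity
  -- translate the goal
  have hgoal1 : (∫ x, (pr (pz (pz ψ)) x.1 x.2 ^ 2 + pz (pz (pz ψ)) x.1 x.2 ^ 2)
      ∂(cylMeasure R a)) = Ivol := by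
    rw [integral_cyl]
  have hgoal2 : spNorm R a 2 (pz Γ) ^ 2 = Nvol := by
    have hgc : Continuous fun x : ℝ × ℝ => pz Γ x.1 x.2 := hpzΓ.continuous
    have hint2 : Integrable (fun x : ℝ × ℝ => pz Γ x.1 x.2 ^ 2) (cylMeasure R a) := by
      rw [integrable_cyl_iff]
      have heq : (fun x : ℝ × ℝ => Real.toNNReal x.1 • (pz Γ x.1 x.2 ^ 2))
          = fun x : ℝ × ℝ => ((Real.toNNReal x.1 : ℝ)) * pz Γ x.1 x.2 ^ 2 := by
        funext x; simp [NNReal.smul_def]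
      rw [heq]
      exact integrableOn_rect
        ((NNReal.continuous_coe.comp
          (continuous_real_toNNReal.comp continuous_fst)).mul
          ((hgc.mul hgc).congr (by intro x; simp only [Pi.mul_apply, Pi.add_apply, Pi.pow_apply]; ring)))
    have hmem : MemLp (fun x : ℝ × ℝ => pz Γ x.1 x.2) 2 (cylMeasure R a) :=
      (memLp_two_iff_integrable_sq hgc.aestronglyMeasurable).2 hint2
    have htR : ((2:ℝ≥0∞)).toReal = (2:ℝ) := by norm_num
    have hX : (0:ℝ) ≤ ∫ x, ‖pz Γ x.1 x.2‖ ^ ((2:ℝ≥0∞)).toReal ∂(cylMeasure R a) :=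
      integral_nonneg fun x => Real.rpow_nonneg (norm_nonneg _) _
    have hX' : (0:ℝ) ≤ ∫ x, ‖pz Γ x.1 x.2‖ ^ (2:ℝ) ∂(cylMeasure R a) := by
      rw [← htR]; exact hX
    have hsp : spNorm R a 2 (pz Γ)
        = (∫ x, ‖pz Γ x.1 x.2‖ ^ (2:ℝ) ∂(cylMeasure R a)) ^ ((1:ℝ)/2) := by
      rw [spNorm, hmem.eLpNorm_eq_integral_rpow_norm two_ne_zero ENNReal.ofNat_ne_top,
        ENNReal.toReal_ofReal (Real.rpow_nonneg hX _), htR, one_div]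
    rw [hsp,
      ← Real.rpow_natCast ((∫ x, ‖pz Γ x.1 x.2‖ ^ (2:ℝ) ∂(cylMeasure R a)) ^ ((1:ℝ)/2)) 2,
      ← Real.rpow_mul hX', show ((1:ℝ)/2) * ((2:ℕ):ℝ) = 1 by norm_num, Real.rpow_one,
      integral_cyl, hNvol]
    apply setIntegral_congr_fun hUmeas
    intro x hx
    show x.1 * ‖pz Γ x.1 x.2‖ ^ (2:ℝ) = x.1 * pz Γ x.1 x.2 ^ 2
    have h2 : ‖pz Γ x.1 x.2‖ ^ (2:ℝ) = pz Γ x.1 x.2 ^ (2:ℕ) := by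
      rw [show (2:ℝ) = ((2:ℕ):ℝ) by norm_num, Real.rpow_natCast,
        Real.norm_eq_abs, sq_abs]
    rw [h2]
  rw [hgoal1, hgoal2, one_mul]
  linarith

end
end

section
/- Second H³ elliptic estimate for the modified stream function (Lemma 4.2, estimate (4.8)): There is a universal constant c > 0 such that every sufficiently regular solution ψ₁ of the modified stream-function problem satisfies ∫_Ω (ψ₁,rrz² + ψ₁,rzz² + ψ₁,zzz²) dx + ∫_{−a}^{a} (∂_z²ψ₁)²|_{r=0} dz + ∫_{−a}^{a} (∂_r∂_zψ₁)²|_{r=R} dz ≤ c |∂_zΓ|²_{2,Ω}. -/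
/-!
Common setup: axially symmetric functions on the finite cylinder
`Ω = {x ∈ ℝ³ : x₁² + x₂² < R², |x₃| < a}` are represented in cylindrical
coordinates as functions `u = u(r, z, t)`.  Integration over `Ω` of an
axisymmetric function is integration over `(0,R) × (-a,a)` with respect to
the weighted measure `r dr dz` (the angular factor `2π` is immaterial and
omitted).
-/

open MeasureTheory Set ENNReal

noncomputable section

namespace H3Aux


abbrev F2 (f : ℝ → ℝ → ℝ) : ℝ × ℝ → ℝ := fun x => f x.1 x.2

theorem le1 : (1 : WithTop ℕ∞) ≤ ((⊤ : ℕ∞) : WithTop ℕ∞) := by exact_mod_cast le_top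
theorem letop1 : ((⊤ : ℕ∞) : WithTop ℕ∞) + 1 ≤ ((⊤ : ℕ∞) : WithTop ℕ∞) := by
  exact_mod_cast le_top

variable {f : ℝ → ℝ → ℝ}

theorem hasDerivAt_slice_r (hf : ContDiff ℝ (⊤ : ℕ∞) (F2 f)) (r z : ℝ) :
    HasDerivAt (fun y => f y z) (fderiv ℝ (F2 f) (r, z) (1, 0)) r := by
  have h1 : HasDerivAt (fun y : ℝ => (y, z)) ((1 : ℝ), (0 : ℝ)) r := by
    simpa using (hasDerivAt_id r).prodMk (hasDerivAt_const r z)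
  exact ((hf.differentiable (by simp) (r, z)).hasFDerivAt.comp_hasDerivAt r h1)

theorem hasDerivAt_slice_z (hf : ContDiff ℝ (⊤ : ℕ∞) (F2 f)) (r z : ℝ) :
    HasDerivAt (fun y => f r y) (fderiv ℝ (F2 f) (r, z) (0, 1)) z := by
  have h1 : HasDerivAt (fun y : ℝ => (r, y)) ((0 : ℝ), (1 : ℝ)) z := by
    simpa using (hasDerivAt_const z r).prodMk (hasDerivAt_id z)
  exact ((hf.differentiable (by simp) (r, z)).hasFDerivAt.comp_hasDerivAt z h1)

theorem pr_eq (hf : ContDiff ℝ (⊤ : ℕ∞) (F2 f)) (r z : ℝ) :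
    pr f r z = fderiv ℝ (F2 f) (r, z) (1, 0) := (hasDerivAt_slice_r hf r z).deriv

theorem pz_eq (hf : ContDiff ℝ (⊤ : ℕ∞) (F2 f)) (r z : ℝ) :
    pz f r z = fderiv ℝ (F2 f) (r, z) (0, 1) := (hasDerivAt_slice_z hf r z).deriv

theorem hasDerivAt_pr (hf : ContDiff ℝ (⊤ : ℕ∞) (F2 f)) (r z : ℝ) :
    HasDerivAt (fun y => f y z) (pr f r z) r :=
  (pr_eq hf r z) ▸ hasDerivAt_slice_r hf r z

theorem hasDerivAt_pz (hf : ContDiff ℝ (⊤ : ℕ∞) (F2 f)) (r z : ℝ) :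
    HasDerivAt (fun y => f r y) (pz f r z) z :=
  (pz_eq hf r z) ▸ hasDerivAt_slice_z hf r z

theorem contDiff_pr (hf : ContDiff ℝ (⊤ : ℕ∞) (F2 f)) :
    ContDiff ℝ (⊤ : ℕ∞) (F2 (pr f)) := by
  have : F2 (pr f) = fun x : ℝ × ℝ => fderiv ℝ (F2 f) x (1, 0) := by
    funext x; exact pr_eq hf x.1 x.2
  rw [this]
  exact (hf.fderiv_right letop1).clm_apply contDiff_const

theorem contDiff_pz (hf : ContDiff ℝ (⊤ : ℕ∞) (F2 f)) :
    ContDiff ℝ (⊤ : ℕ∞) (F2 (pz f)) := by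
  have : F2 (pz f) = fun x : ℝ × ℝ => fderiv ℝ (F2 f) x (0, 1) := by
    funext x; exact pz_eq hf x.1 x.2
  rw [this]
  exact (hf.fderiv_right letop1).clm_apply contDiff_const

theorem hasDerivAt_fderiv_apply_z (hf : ContDiff ℝ (⊤ : ℕ∞) (F2 f)) (v : ℝ × ℝ) (r z : ℝ) :
    HasDerivAt (fun y => fderiv ℝ (F2 f) (r, y) v)
      (fderiv ℝ (fderiv ℝ (F2 f)) (r, z) (0, 1) v) z := by
  have h1 : HasDerivAt (fun y : ℝ => (r, y)) ((0 : ℝ), (1 : ℝ)) z := by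
    simpa using (hasDerivAt_const z r).prodMk (hasDerivAt_id z)
  have hG : DifferentiableAt ℝ (fderiv ℝ (F2 f)) (r, z) :=
    ((hf.fderiv_right letop1).differentiable (by simp)) (r, z)
  have h2 : HasDerivAt (fun y : ℝ => fderiv ℝ (F2 f) (r, y))
      (fderiv ℝ (fderiv ℝ (F2 f)) (r, z) (0, 1)) z :=
    hG.hasFDerivAt.comp_hasDerivAt z h1
  exact ((ContinuousLinearMap.apply ℝ ℝ v).hasFDerivAt.comp_hasDerivAt z h2)

theorem hasDerivAt_fderiv_apply_r (hf : ContDiff ℝ (⊤ : ℕ∞) (F2 f)) (v : ℝ × ℝ) (r z : ℝ) :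
    HasDerivAt (fun y => fderiv ℝ (F2 f) (y, z) v)
      (fderiv ℝ (fderiv ℝ (F2 f)) (r, z) (1, 0) v) r := by
  have h1 : HasDerivAt (fun y : ℝ => (y, z)) ((1 : ℝ), (0 : ℝ)) r := by
    simpa using (hasDerivAt_id r).prodMk (hasDerivAt_const r z)
  have hG : DifferentiableAt ℝ (fderiv ℝ (F2 f)) (r, z) :=
    ((hf.fderiv_right letop1).differentiable (by simp)) (r, z)
  have h2 : HasDerivAt (fun y : ℝ => fderiv ℝ (F2 f) (y, z))
      (fderiv ℝ (fderiv ℝ (F2 f)) (r, z) (1, 0)) r :=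
    hG.hasFDerivAt.comp_hasDerivAt r h1
  exact ((ContinuousLinearMap.apply ℝ ℝ v).hasFDerivAt.comp_hasDerivAt r h2)

theorem pz_pr_comm (hf : ContDiff ℝ (⊤ : ℕ∞) (F2 f)) (r z : ℝ) :
    pz (pr f) r z = pr (pz f) r z := by
  have e1 : pz (pr f) r z = fderiv ℝ (fderiv ℝ (F2 f)) (r, z) (0, 1) (1, 0) := by
    have h : (fun y => pr f r y) = fun y => fderiv ℝ (F2 f) (r, y) (1, 0) := by
      funext y; exact pr_eq hf r y
    show deriv (fun y => pr f r y) z = _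
    rw [h]
    exact (hasDerivAt_fderiv_apply_z hf (1, 0) r z).deriv
  have e2 : pr (pz f) r z = fderiv ℝ (fderiv ℝ (F2 f)) (r, z) (1, 0) (0, 1) := by
    have h : (fun y => pz f y z) = fun y => fderiv ℝ (F2 f) (y, z) (0, 1) := by
      funext y; exact pz_eq hf y z
    show deriv (fun y => pz f y z) r = _
    rw [h]
    exact (hasDerivAt_fderiv_apply_r hf (0, 1) r z).deriv
  rw [e1, e2]
  exact second_derivative_symmetric
    (fun y => (hf.differentiable (by simp) y).hasFDerivAt)
    (((hf.fderiv_right letop1).differentiable (by simp)) (r, z)).hasFDerivAt (0, 1) (1, 0)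

theorem continuous_slice_r {h : ℝ → ℝ → ℝ} (hc : Continuous (F2 h)) (z : ℝ) :
    Continuous fun y => h y z := hc.comp (continuous_id.prodMk continuous_const)

theorem continuous_slice_z {h : ℝ → ℝ → ℝ} (hc : Continuous (F2 h)) (r : ℝ) :
    Continuous fun y => h r y := hc.comp (continuous_const.prodMk continuous_id)

theorem integrableOn_rect {h : ℝ × ℝ → ℝ} (hc : Continuous h) (p q p' q' : ℝ) :
    IntegrableOn h (Ioo p q ×ˢ Ioo p' q') volume := by
  have : IntegrableOn h (Icc p q ×ˢ Icc p' q') volume :=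
    hc.continuousOn.integrableOn_compact (isCompact_Icc.prod isCompact_Icc)
  exact this.mono_set (prod_mono Ioo_subset_Icc_self Ioo_subset_Icc_self)

theorem intOn1 {v : ℝ → ℝ} (hv : Continuous v) (p q : ℝ) : IntegrableOn v (Ioo p q) volume :=
  (hv.continuousOn.integrableOn_compact isCompact_Icc).mono_set Ioo_subset_Icc_self

theorem J_eq_rz {h : ℝ × ℝ → ℝ} (hc : Continuous h) (p q p' q' : ℝ) :
    ∫ x in Ioo p q ×ˢ Ioo p' q', h x
      = ∫ r in Ioo p q, ∫ z in Ioo p' q', h (r, z) := by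
  have hi := integrableOn_rect hc p q p' q'
  rw [Measure.volume_eq_prod] at hi ⊢
  exact setIntegral_prod h hi

theorem J_eq_zr {h : ℝ × ℝ → ℝ} (hc : Continuous h) (p q p' q' : ℝ) :
    ∫ x in Ioo p q ×ˢ Ioo p' q', h x
      = ∫ z in Ioo p' q', ∫ r in Ioo p q, h (r, z) := by
  rw [J_eq_rz hc]
  have hi : Integrable (Function.uncurry fun r z => h (r, z))
      ((volume.restrict (Ioo p q)).prod (volume.restrict (Ioo p' q'))) := by
    rw [Measure.prod_restrict]
    have := integrableOn_rect hc p q p' q'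
    rwa [Measure.volume_eq_prod] at this
  exact integral_integral_swap hi

theorem integral_Ioo_ftc {φ ψ : ℝ → ℝ} {p q : ℝ} (hpq : p ≤ q)
    (hd : ∀ x, HasDerivAt φ (ψ x) x) (hc : Continuous ψ) :
    ∫ x in Ioo p q, ψ x = φ q - φ p := by
  rw [← integral_Ioc_eq_integral_Ioo, ← intervalIntegral.integral_of_le hpq]
  exact intervalIntegral.integral_eq_sub_of_hasDerivAt (fun x _ => hd x)
    (hc.intervalIntegrable p q)

theorem deriv_eq_zero_of_eqOn {v : ℝ → ℝ} {s : Set ℝ} (hs : IsOpen s)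
    (hv : ∀ y ∈ s, v y = 0) {y : ℝ} (hy : y ∈ s) : deriv v y = 0 := by
  have h : v =ᶠ[nhds y] (fun _ => 0) := Filter.eventuallyEq_of_mem (hs.mem_nhds hy) hv
  rw [h.deriv_eq, deriv_const]


theorem key {R a : ℝ} (hR : 0 < R) (ha : 0 < a) {u g : ℝ → ℝ → ℝ}
    (hu : ContDiff ℝ (⊤ : ℕ∞) (F2 u)) (hg : ContDiff ℝ (⊤ : ℕ∞) (F2 g))
    (h1 : ∀ z ∈ Ioo (-a) a, pr u 0 z = 0)
    (h2a : ∀ r ∈ Ioo 0 R, pz u r a = 0)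
    (h2b : ∀ r ∈ Ioo 0 R, pz u r (-a) = 0)
    (h3 : ∀ z ∈ Ioo (-a) a, u R z = 0)
    (hPDE : ∀ r ∈ Ioo 0 R, ∀ z ∈ Ioo (-a) a,
      3 * pr u r z = r * (-g r z - pr (pr u) r z - pz (pz u) r z)) :
    (∫ x in Ioo 0 R ×ˢ Ioo (-a) a,
        (pr (pr u) x.1 x.2 ^ 2 + pz (pr u) x.1 x.2 ^ 2 + pz (pz u) x.1 x.2 ^ 2) * x.1)
      + (∫ z in Ioo (-a) a, pz u 0 z ^ 2) + (∫ z in Ioo (-a) a, pr u R z ^ 2)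
      ≤ ∫ x in Ioo 0 R ×ˢ Ioo (-a) a, g x.1 x.2 ^ 2 * x.1 := by
  have hle : -a ≤ a := by linarith
  have hw : ContDiff ℝ (⊤ : ℕ∞) (F2 (pr u)) := contDiff_pr hu
  have hzu : ContDiff ℝ (⊤ : ℕ∞) (F2 (pz u)) := contDiff_pz hu
  have hA : ContDiff ℝ (⊤ : ℕ∞) (F2 (pr (pr u))) := contDiff_pr hw
  have hC : ContDiff ℝ (⊤ : ℕ∞) (F2 (pz (pz u))) := contDiff_pz hzu
  have hzw : ContDiff ℝ (⊤ : ℕ∞) (F2 (pz (pr u))) := contDiff_pz hw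
  have hzzw : ContDiff ℝ (⊤ : ℕ∞) (F2 (pz (pz (pr u)))) := contDiff_pz hzw
  have comm1 : ∀ r z : ℝ, pz (pr u) r z = pr (pz u) r z := pz_pr_comm hu
  have comm1' : pr (pz u) = pz (pr u) := by
    funext r z; exact (comm1 r z).symm
  have prC : ∀ r z : ℝ, pr (pz (pz u)) r z = pz (pz (pr u)) r z := by
    intro r z
    have h := (pz_pr_comm hzu r z).symm
    rw [h, comm1']
  -- boundary facts
  have b2 : ∀ z ∈ Ioo (-a) a, pz u R z = 0 := by
    intro z hz
    exact deriv_eq_zero_of_eqOn isOpen_Ioo h3 hz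
  have b3 : ∀ z ∈ Ioo (-a) a, pz (pz u) R z = 0 := by
    intro z hz
    exact deriv_eq_zero_of_eqOn isOpen_Ioo b2 hz
  have b4 : ∀ r ∈ Ioo 0 R, pz (pr u) r a = 0 := by
    intro r hr
    rw [comm1]
    exact deriv_eq_zero_of_eqOn isOpen_Ioo h2a hr
  have b5 : ∀ r ∈ Ioo 0 R, pz (pr u) r (-a) = 0 := by
    intro r hr
    rw [comm1]
    exact deriv_eq_zero_of_eqOn isOpen_Ioo h2b hr
  have hSmeas : MeasurableSet (Ioo (0:ℝ) R ×ˢ Ioo (-a) a) :=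
    measurableSet_Ioo.prod measurableSet_Ioo
  -- T1
  have hT1 : (∫ x in Ioo 0 R ×ˢ Ioo (-a) a, pr (pr u) x.1 x.2 * pr u x.1 x.2)
      = (∫ z in Ioo (-a) a, pr u R z ^ 2) / 2 := by
    have hcont : Continuous fun x : ℝ × ℝ => pr (pr u) x.1 x.2 * pr u x.1 x.2 :=
      hA.continuous.mul hw.continuous
    rw [J_eq_zr hcont]
    have step : ∀ z ∈ Ioo (-a) a,
        (∫ r in Ioo 0 R, pr (pr u) r z * pr u r z) = pr u R z ^ 2 / 2 := by
      intro z hz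
      have hd : ∀ x : ℝ, HasDerivAt (fun y => pr u y z * pr u y z / 2)
          (pr (pr u) x z * pr u x z) x := by
        intro x
        have h := ((hasDerivAt_pr hw x z).mul (hasDerivAt_pr hw x z)).div_const 2
        exact h.congr_deriv (by ring)
      have hftc := integral_Ioo_ftc hR.le hd
        ((continuous_slice_r hA.continuous z).mul (continuous_slice_r hw.continuous z))
      rw [hftc, h1 z hz]
      ring
    rw [setIntegral_congr_fun measurableSet_Ioo step, integral_div]
  -- T3
  have hT3 : (∫ x in Ioo 0 R ×ˢ Ioo (-a) a, pz (pz u) x.1 x.2 * pr u x.1 x.2)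
      = (∫ z in Ioo (-a) a, pz u 0 z ^ 2) / 2 := by
    have hcont : Continuous fun x : ℝ × ℝ => pz (pz u) x.1 x.2 * pr u x.1 x.2 :=
      hC.continuous.mul hw.continuous
    have hcont2 : Continuous fun x : ℝ × ℝ => pz u x.1 x.2 * pz (pr u) x.1 x.2 :=
      hzu.continuous.mul hzw.continuous
    rw [J_eq_rz hcont]
    have stepA : ∀ r ∈ Ioo 0 R,
        (∫ z in Ioo (-a) a, pz (pz u) r z * pr u r z)
          = - ∫ z in Ioo (-a) a, pz u r z * pz (pr u) r z := by
      intro r hr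
      have hd : ∀ x : ℝ, HasDerivAt (fun y => pz u r y * pr u r y)
          (pz (pz u) r x * pr u r x + pz u r x * pz (pr u) r x) x := by
        intro x
        exact (hasDerivAt_pz hzu r x).mul (hasDerivAt_pz hw r x)
      have hftc := integral_Ioo_ftc hle hd
        (((continuous_slice_z hC.continuous r).mul (continuous_slice_z hw.continuous r)).add
          ((continuous_slice_z hzu.continuous r).mul (continuous_slice_z hzw.continuous r)))
      rw [h2a r hr, h2b r hr] at hftc
      have hadd := integral_add (μ := volume.restrict (Ioo (-a) a))
        (f := fun z => pz (pz u) r z * pr u r z)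
        (g := fun z => pz u r z * pz (pr u) r z)
        (intOn1 ((continuous_slice_z hC.continuous r).mul
          (continuous_slice_z hw.continuous r)) _ _)
        (intOn1 ((continuous_slice_z hzu.continuous r).mul
          (continuous_slice_z hzw.continuous r)) _ _)
      rw [hadd] at hftc
      simp only [zero_mul] at hftc
      linarith
    rw [setIntegral_congr_fun measurableSet_Ioo stepA, integral_neg]
    have hswap : (∫ r in Ioo 0 R, ∫ z in Ioo (-a) a, pz u r z * pz (pr u) r z)
        = ∫ z in Ioo (-a) a, ∫ r in Ioo 0 R, pz u r z * pz (pr u) r z := by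
      rw [← J_eq_rz hcont2, J_eq_zr hcont2]
    rw [hswap]
    have stepB : ∀ z ∈ Ioo (-a) a,
        (∫ r in Ioo 0 R, pz u r z * pz (pr u) r z) = - (pz u 0 z ^ 2 / 2) := by
      intro z hz
      have hd : ∀ x : ℝ, HasDerivAt (fun y => pz u y z * pz u y z / 2)
          (pz u x z * pz (pr u) x z) x := by
        intro x
        have h := ((hasDerivAt_pr hzu x z).mul (hasDerivAt_pr hzu x z)).div_const 2
        exact h.congr_deriv (by rw [comm1]; ring)
      have hftc := integral_Ioo_ftc hR.le hd
        ((continuous_slice_r hzu.continuous z).mul (continuous_slice_r hzw.continuous z))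
      rw [hftc, b2 z hz]
      ring
    rw [setIntegral_congr_fun measurableSet_Ioo stepB, integral_neg, neg_neg, integral_div]
  -- Claim 1 : ∫ (A·C·r + w·pzzw·r + w·C) = 0
  have hcl1 : (∫ x in Ioo 0 R ×ˢ Ioo (-a) a,
      (pr (pr u) x.1 x.2 * pz (pz u) x.1 x.2 * x.1
        + pr u x.1 x.2 * pz (pz (pr u)) x.1 x.2 * x.1
        + pr u x.1 x.2 * pz (pz u) x.1 x.2)) = 0 := by
    have hcont : Continuous fun x : ℝ × ℝ =>
        pr (pr u) x.1 x.2 * pz (pz u) x.1 x.2 * x.1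
          + pr u x.1 x.2 * pz (pz (pr u)) x.1 x.2 * x.1
          + pr u x.1 x.2 * pz (pz u) x.1 x.2 :=
      (((hA.continuous.mul hC.continuous).mul continuous_fst).add
        ((hw.continuous.mul hzzw.continuous).mul continuous_fst)).add
        (hw.continuous.mul hC.continuous)
    rw [J_eq_zr hcont]
    have step : ∀ z ∈ Ioo (-a) a,
        (∫ r in Ioo 0 R, (pr (pr u) r z * pz (pz u) r z * r
          + pr u r z * pz (pz (pr u)) r z * r + pr u r z * pz (pz u) r z)) = 0 := by
      intro z hz
      have hd : ∀ x : ℝ, HasDerivAt (fun y => pr u y z * pz (pz u) y z * y)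
          (pr (pr u) x z * pz (pz u) x z * x
            + pr u x z * pz (pz (pr u)) x z * x + pr u x z * pz (pz u) x z) x := by
        intro x
        have h := ((hasDerivAt_pr hw x z).mul (hasDerivAt_pr hC x z)).mul (hasDerivAt_id x)
        exact h.congr_deriv (by rw [← prC x z]; simp only [id_eq, Pi.mul_apply]; ring)
      have hftc := integral_Ioo_ftc hR.le hd
        ((((continuous_slice_r hA.continuous z).mul (continuous_slice_r hC.continuous z)).mul
            continuous_id).add
          (((continuous_slice_r hw.continuous z).mul
            (continuous_slice_r hzzw.continuous z)).mul continuous_id) |>.add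
          ((continuous_slice_r hw.continuous z).mul (continuous_slice_r hC.continuous z)))
      rw [hftc, b3 z hz]
      ring
    rw [setIntegral_congr_fun measurableSet_Ioo step, integral_zero]
  -- Claim 2 : ∫ (w·pzzw·r + pzw²·r) = 0
  have hcl2 : (∫ x in Ioo 0 R ×ˢ Ioo (-a) a,
      (pr u x.1 x.2 * pz (pz (pr u)) x.1 x.2 * x.1
        + pz (pr u) x.1 x.2 ^ 2 * x.1)) = 0 := by
    have hcont : Continuous fun x : ℝ × ℝ =>
        pr u x.1 x.2 * pz (pz (pr u)) x.1 x.2 * x.1 + pz (pr u) x.1 x.2 ^ 2 * x.1 :=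
      ((hw.continuous.mul hzzw.continuous).mul continuous_fst).add
        (((hzw.continuous.pow 2)).mul continuous_fst)
    rw [J_eq_rz hcont]
    have step : ∀ r ∈ Ioo 0 R,
        (∫ z in Ioo (-a) a, (pr u r z * pz (pz (pr u)) r z * r
          + pz (pr u) r z ^ 2 * r)) = 0 := by
      intro r hr
      have hd : ∀ x : ℝ, HasDerivAt (fun y => pr u r y * pz (pr u) r y * r)
          (pr u r x * pz (pz (pr u)) r x * r + pz (pr u) r x ^ 2 * r) x := by
        intro x
        have h := ((hasDerivAt_pz hw r x).mul (hasDerivAt_pz hzw r x)).mul_const r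
        exact h.congr_deriv (by ring)
      have hftc := integral_Ioo_ftc hle hd
        ((((continuous_slice_z hw.continuous r).mul
            (continuous_slice_z hzzw.continuous r)).mul continuous_const).add
          (((continuous_slice_z hzw.continuous r).pow 2).mul continuous_const))
      rw [hftc, b4 r hr, b5 r hr]
      ring
    rw [setIntegral_congr_fun measurableSet_Ioo step, integral_zero]
  -- PDE step
  have hPDEJ : (∫ x in Ioo 0 R ×ˢ Ioo (-a) a,
      (pr (pr u) x.1 x.2 + pz (pz u) x.1 x.2)
        * (-g x.1 x.2 - pr (pr u) x.1 x.2 - pz (pz u) x.1 x.2) * x.1)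
      = ∫ x in Ioo 0 R ×ˢ Ioo (-a) a,
          3 * ((pr (pr u) x.1 x.2 + pz (pz u) x.1 x.2) * pr u x.1 x.2) := by
    apply setIntegral_congr_fun hSmeas
    intro x hx
    dsimp only
    have hp := hPDE x.1 hx.1 x.2 hx.2
    have e1 : (pr (pr u) x.1 x.2 + pz (pz u) x.1 x.2)
        * (-g x.1 x.2 - pr (pr u) x.1 x.2 - pz (pz u) x.1 x.2) * x.1
        = (pr (pr u) x.1 x.2 + pz (pz u) x.1 x.2)
          * (x.1 * (-g x.1 x.2 - pr (pr u) x.1 x.2 - pz (pz u) x.1 x.2)) := by ring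
    rw [e1, ← hp]
    ring
  -- integrability of all pieces
  have iA : IntegrableOn (fun x : ℝ × ℝ => pr (pr u) x.1 x.2 ^ 2 * x.1)
      (Ioo 0 R ×ˢ Ioo (-a) a) volume :=
    integrableOn_rect ((hA.continuous.pow 2).mul continuous_fst) _ _ _ _
  have izw : IntegrableOn (fun x : ℝ × ℝ => pz (pr u) x.1 x.2 ^ 2 * x.1)
      (Ioo 0 R ×ˢ Ioo (-a) a) volume :=
    integrableOn_rect ((hzw.continuous.pow 2).mul continuous_fst) _ _ _ _
  have iC : IntegrableOn (fun x : ℝ × ℝ => pz (pz u) x.1 x.2 ^ 2 * x.1)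
      (Ioo 0 R ×ˢ Ioo (-a) a) volume :=
    integrableOn_rect ((hC.continuous.pow 2).mul continuous_fst) _ _ _ _
  have iAC : IntegrableOn (fun x : ℝ × ℝ =>
      2 * (pr (pr u) x.1 x.2 * pz (pz u) x.1 x.2 * x.1)) (Ioo 0 R ×ˢ Ioo (-a) a) volume :=
    integrableOn_rect (continuous_const.mul
      ((hA.continuous.mul hC.continuous).mul continuous_fst)) _ _ _ _
  have iB : IntegrableOn (fun x : ℝ × ℝ =>
      2 * ((pr (pr u) x.1 x.2 + pz (pz u) x.1 x.2)
        * (-g x.1 x.2 - pr (pr u) x.1 x.2 - pz (pz u) x.1 x.2) * x.1))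
      (Ioo 0 R ×ˢ Ioo (-a) a) volume :=
    integrableOn_rect (continuous_const.mul
      (((hA.continuous.add hC.continuous).mul
        (((hg.continuous.neg).sub hA.continuous).sub hC.continuous)).mul continuous_fst)) _ _ _ _
  have iBB : IntegrableOn (fun x : ℝ × ℝ =>
      (-g x.1 x.2 - pr (pr u) x.1 x.2 - pz (pz u) x.1 x.2) ^ 2 * x.1)
      (Ioo 0 R ×ˢ Ioo (-a) a) volume :=
    integrableOn_rect (((((hg.continuous.neg).sub hA.continuous).sub
      hC.continuous).pow 2).mul continuous_fst) _ _ _ _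
  have iwzzw : IntegrableOn (fun x : ℝ × ℝ =>
      pr u x.1 x.2 * pz (pz (pr u)) x.1 x.2 * x.1) (Ioo 0 R ×ˢ Ioo (-a) a) volume :=
    integrableOn_rect ((hw.continuous.mul hzzw.continuous).mul continuous_fst) _ _ _ _
  have iACp : IntegrableOn (fun x : ℝ × ℝ =>
      pr (pr u) x.1 x.2 * pz (pz u) x.1 x.2 * x.1) (Ioo 0 R ×ˢ Ioo (-a) a) volume :=
    integrableOn_rect ((hA.continuous.mul hC.continuous).mul continuous_fst) _ _ _ _
  have iwC : IntegrableOn (fun x : ℝ × ℝ =>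
      pr u x.1 x.2 * pz (pz u) x.1 x.2) (Ioo 0 R ×ˢ Ioo (-a) a) volume :=
    integrableOn_rect (hw.continuous.mul hC.continuous) _ _ _ _
  have iAw : IntegrableOn (fun x : ℝ × ℝ =>
      pr (pr u) x.1 x.2 * pr u x.1 x.2) (Ioo 0 R ×ˢ Ioo (-a) a) volume :=
    integrableOn_rect (hA.continuous.mul hw.continuous) _ _ _ _
  have iCw : IntegrableOn (fun x : ℝ × ℝ =>
      pz (pz u) x.1 x.2 * pr u x.1 x.2) (Ioo 0 R ×ˢ Ioo (-a) a) volume :=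
    integrableOn_rect (hC.continuous.mul hw.continuous) _ _ _ _
  -- split LHS main integral
  have hsplitL : (∫ x in Ioo 0 R ×ˢ Ioo (-a) a,
      (pr (pr u) x.1 x.2 ^ 2 + pz (pr u) x.1 x.2 ^ 2 + pz (pz u) x.1 x.2 ^ 2) * x.1)
      = (∫ x in Ioo 0 R ×ˢ Ioo (-a) a, pr (pr u) x.1 x.2 ^ 2 * x.1)
        + ((∫ x in Ioo 0 R ×ˢ Ioo (-a) a, pz (pr u) x.1 x.2 ^ 2 * x.1)
          + ∫ x in Ioo 0 R ×ˢ Ioo (-a) a, pz (pz u) x.1 x.2 ^ 2 * x.1) := by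
    have e : (fun x : ℝ × ℝ =>
        (pr (pr u) x.1 x.2 ^ 2 + pz (pr u) x.1 x.2 ^ 2 + pz (pz u) x.1 x.2 ^ 2) * x.1)
        = fun x : ℝ × ℝ => pr (pr u) x.1 x.2 ^ 2 * x.1
          + (pz (pr u) x.1 x.2 ^ 2 * x.1 + pz (pz u) x.1 x.2 ^ 2 * x.1) := by
      funext x; ring
    have s1 : (∫ x in Ioo 0 R ×ˢ Ioo (-a) a, (pr (pr u) x.1 x.2 ^ 2 * x.1
          + (pz (pr u) x.1 x.2 ^ 2 * x.1 + pz (pz u) x.1 x.2 ^ 2 * x.1)))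
        = (∫ x in Ioo 0 R ×ˢ Ioo (-a) a, pr (pr u) x.1 x.2 ^ 2 * x.1)
          + ∫ x in Ioo 0 R ×ˢ Ioo (-a) a,
              (pz (pr u) x.1 x.2 ^ 2 * x.1 + pz (pz u) x.1 x.2 ^ 2 * x.1) :=
      integral_add iA (izw.add iC)
    have s2 : (∫ x in Ioo 0 R ×ˢ Ioo (-a) a,
          (pz (pr u) x.1 x.2 ^ 2 * x.1 + pz (pz u) x.1 x.2 ^ 2 * x.1))
        = (∫ x in Ioo 0 R ×ˢ Ioo (-a) a, pz (pr u) x.1 x.2 ^ 2 * x.1)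
          + ∫ x in Ioo 0 R ×ˢ Ioo (-a) a, pz (pz u) x.1 x.2 ^ 2 * x.1 :=
      integral_add izw iC
    rw [e, s1, s2]
  -- split RHS
  have hsplitR : (∫ x in Ioo 0 R ×ˢ Ioo (-a) a, g x.1 x.2 ^ 2 * x.1)
      = (∫ x in Ioo 0 R ×ˢ Ioo (-a) a, pr (pr u) x.1 x.2 ^ 2 * x.1)
        + ((∫ x in Ioo 0 R ×ˢ Ioo (-a) a, pz (pz u) x.1 x.2 ^ 2 * x.1)
        + ((∫ x in Ioo 0 R ×ˢ Ioo (-a) a,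
            2 * (pr (pr u) x.1 x.2 * pz (pz u) x.1 x.2 * x.1))
        + ((∫ x in Ioo 0 R ×ˢ Ioo (-a) a,
            2 * ((pr (pr u) x.1 x.2 + pz (pz u) x.1 x.2)
              * (-g x.1 x.2 - pr (pr u) x.1 x.2 - pz (pz u) x.1 x.2) * x.1))
        + ∫ x in Ioo 0 R ×ˢ Ioo (-a) a,
            (-g x.1 x.2 - pr (pr u) x.1 x.2 - pz (pz u) x.1 x.2) ^ 2 * x.1))) := by
    have e : (fun x : ℝ × ℝ => g x.1 x.2 ^ 2 * x.1)
        = fun x : ℝ × ℝ => pr (pr u) x.1 x.2 ^ 2 * x.1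
          + (pz (pz u) x.1 x.2 ^ 2 * x.1
          + (2 * (pr (pr u) x.1 x.2 * pz (pz u) x.1 x.2 * x.1)
          + (2 * ((pr (pr u) x.1 x.2 + pz (pz u) x.1 x.2)
              * (-g x.1 x.2 - pr (pr u) x.1 x.2 - pz (pz u) x.1 x.2) * x.1)
          + (-g x.1 x.2 - pr (pr u) x.1 x.2 - pz (pz u) x.1 x.2) ^ 2 * x.1))) := by
      funext x; ring
    have s1 : (∫ x in Ioo 0 R ×ˢ Ioo (-a) a, (pr (pr u) x.1 x.2 ^ 2 * x.1
          + (pz (pz u) x.1 x.2 ^ 2 * x.1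
          + (2 * (pr (pr u) x.1 x.2 * pz (pz u) x.1 x.2 * x.1)
          + (2 * ((pr (pr u) x.1 x.2 + pz (pz u) x.1 x.2)
              * (-g x.1 x.2 - pr (pr u) x.1 x.2 - pz (pz u) x.1 x.2) * x.1)
          + (-g x.1 x.2 - pr (pr u) x.1 x.2 - pz (pz u) x.1 x.2) ^ 2 * x.1)))))
        = (∫ x in Ioo 0 R ×ˢ Ioo (-a) a, pr (pr u) x.1 x.2 ^ 2 * x.1)
          + ∫ x in Ioo 0 R ×ˢ Ioo (-a) a, (pz (pz u) x.1 x.2 ^ 2 * x.1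
          + (2 * (pr (pr u) x.1 x.2 * pz (pz u) x.1 x.2 * x.1)
          + (2 * ((pr (pr u) x.1 x.2 + pz (pz u) x.1 x.2)
              * (-g x.1 x.2 - pr (pr u) x.1 x.2 - pz (pz u) x.1 x.2) * x.1)
          + (-g x.1 x.2 - pr (pr u) x.1 x.2 - pz (pz u) x.1 x.2) ^ 2 * x.1))) :=
      integral_add iA (iC.add (iAC.add (iB.add iBB)))
    have s2 : (∫ x in Ioo 0 R ×ˢ Ioo (-a) a, (pz (pz u) x.1 x.2 ^ 2 * x.1
          + (2 * (pr (pr u) x.1 x.2 * pz (pz u) x.1 x.2 * x.1)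
          + (2 * ((pr (pr u) x.1 x.2 + pz (pz u) x.1 x.2)
              * (-g x.1 x.2 - pr (pr u) x.1 x.2 - pz (pz u) x.1 x.2) * x.1)
          + (-g x.1 x.2 - pr (pr u) x.1 x.2 - pz (pz u) x.1 x.2) ^ 2 * x.1))))
        = (∫ x in Ioo 0 R ×ˢ Ioo (-a) a, pz (pz u) x.1 x.2 ^ 2 * x.1)
          + ∫ x in Ioo 0 R ×ˢ Ioo (-a) a,
            (2 * (pr (pr u) x.1 x.2 * pz (pz u) x.1 x.2 * x.1)
          + (2 * ((pr (pr u) x.1 x.2 + pz (pz u) x.1 x.2)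
              * (-g x.1 x.2 - pr (pr u) x.1 x.2 - pz (pz u) x.1 x.2) * x.1)
          + (-g x.1 x.2 - pr (pr u) x.1 x.2 - pz (pz u) x.1 x.2) ^ 2 * x.1)) :=
      integral_add iC (iAC.add (iB.add iBB))
    have s3 : (∫ x in Ioo 0 R ×ˢ Ioo (-a) a,
          (2 * (pr (pr u) x.1 x.2 * pz (pz u) x.1 x.2 * x.1)
          + (2 * ((pr (pr u) x.1 x.2 + pz (pz u) x.1 x.2)
              * (-g x.1 x.2 - pr (pr u) x.1 x.2 - pz (pz u) x.1 x.2) * x.1)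
          + (-g x.1 x.2 - pr (pr u) x.1 x.2 - pz (pz u) x.1 x.2) ^ 2 * x.1)))
        = (∫ x in Ioo 0 R ×ˢ Ioo (-a) a,
            2 * (pr (pr u) x.1 x.2 * pz (pz u) x.1 x.2 * x.1))
          + ∫ x in Ioo 0 R ×ˢ Ioo (-a) a,
            (2 * ((pr (pr u) x.1 x.2 + pz (pz u) x.1 x.2)
              * (-g x.1 x.2 - pr (pr u) x.1 x.2 - pz (pz u) x.1 x.2) * x.1)
          + (-g x.1 x.2 - pr (pr u) x.1 x.2 - pz (pz u) x.1 x.2) ^ 2 * x.1) :=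
      integral_add iAC (iB.add iBB)
    have s4 : (∫ x in Ioo 0 R ×ˢ Ioo (-a) a,
          (2 * ((pr (pr u) x.1 x.2 + pz (pz u) x.1 x.2)
              * (-g x.1 x.2 - pr (pr u) x.1 x.2 - pz (pz u) x.1 x.2) * x.1)
          + (-g x.1 x.2 - pr (pr u) x.1 x.2 - pz (pz u) x.1 x.2) ^ 2 * x.1))
        = (∫ x in Ioo 0 R ×ˢ Ioo (-a) a,
            2 * ((pr (pr u) x.1 x.2 + pz (pz u) x.1 x.2)
              * (-g x.1 x.2 - pr (pr u) x.1 x.2 - pz (pz u) x.1 x.2) * x.1))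
          + ∫ x in Ioo 0 R ×ˢ Ioo (-a) a,
            (-g x.1 x.2 - pr (pr u) x.1 x.2 - pz (pz u) x.1 x.2) ^ 2 * x.1 :=
      integral_add iB iBB
    rw [e, s1, s2, s3, s4]
  -- evaluate the PDE cross term
  have hBval : (∫ x in Ioo 0 R ×ˢ Ioo (-a) a,
      2 * ((pr (pr u) x.1 x.2 + pz (pz u) x.1 x.2)
        * (-g x.1 x.2 - pr (pr u) x.1 x.2 - pz (pz u) x.1 x.2) * x.1))
      = 6 * ((∫ z in Ioo (-a) a, pr u R z ^ 2) / 2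
          + (∫ z in Ioo (-a) a, pz u 0 z ^ 2) / 2) := by
    rw [integral_const_mul, hPDEJ, integral_const_mul]
    have e : (fun x : ℝ × ℝ => (pr (pr u) x.1 x.2 + pz (pz u) x.1 x.2) * pr u x.1 x.2)
        = fun x : ℝ × ℝ => pr (pr u) x.1 x.2 * pr u x.1 x.2
          + pz (pz u) x.1 x.2 * pr u x.1 x.2 := by
      funext x; ring
    have s : (∫ x in Ioo 0 R ×ˢ Ioo (-a) a, (pr (pr u) x.1 x.2 * pr u x.1 x.2
          + pz (pz u) x.1 x.2 * pr u x.1 x.2))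
        = (∫ x in Ioo 0 R ×ˢ Ioo (-a) a, pr (pr u) x.1 x.2 * pr u x.1 x.2)
          + ∫ x in Ioo 0 R ×ˢ Ioo (-a) a, pz (pz u) x.1 x.2 * pr u x.1 x.2 :=
      integral_add iAw iCw
    rw [e, s, hT1, hT3]
    ring
  -- split claim 1
  have hcl1' : (∫ x in Ioo 0 R ×ˢ Ioo (-a) a, pr (pr u) x.1 x.2 * pz (pz u) x.1 x.2 * x.1)
      + (∫ x in Ioo 0 R ×ˢ Ioo (-a) a, pr u x.1 x.2 * pz (pz (pr u)) x.1 x.2 * x.1)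
      + (∫ x in Ioo 0 R ×ˢ Ioo (-a) a, pz (pz u) x.1 x.2 * pr u x.1 x.2) = 0 := by
    have t1 : (∫ x in Ioo 0 R ×ˢ Ioo (-a) a,
          (pr (pr u) x.1 x.2 * pz (pz u) x.1 x.2 * x.1
            + pr u x.1 x.2 * pz (pz (pr u)) x.1 x.2 * x.1
            + pr u x.1 x.2 * pz (pz u) x.1 x.2))
        = (∫ x in Ioo 0 R ×ˢ Ioo (-a) a,
            (pr (pr u) x.1 x.2 * pz (pz u) x.1 x.2 * x.1
              + pr u x.1 x.2 * pz (pz (pr u)) x.1 x.2 * x.1))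
          + ∫ x in Ioo 0 R ×ˢ Ioo (-a) a, pr u x.1 x.2 * pz (pz u) x.1 x.2 :=
      integral_add (iACp.add iwzzw) iwC
    have t2 : (∫ x in Ioo 0 R ×ˢ Ioo (-a) a,
          (pr (pr u) x.1 x.2 * pz (pz u) x.1 x.2 * x.1
            + pr u x.1 x.2 * pz (pz (pr u)) x.1 x.2 * x.1))
        = (∫ x in Ioo 0 R ×ˢ Ioo (-a) a, pr (pr u) x.1 x.2 * pz (pz u) x.1 x.2 * x.1)
          + ∫ x in Ioo 0 R ×ˢ Ioo (-a) a, pr u x.1 x.2 * pz (pz (pr u)) x.1 x.2 * x.1 :=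
      integral_add iACp iwzzw
    have ewC : (fun x : ℝ × ℝ => pr u x.1 x.2 * pz (pz u) x.1 x.2)
        = fun x : ℝ × ℝ => pz (pz u) x.1 x.2 * pr u x.1 x.2 := by
      funext x; ring
    rw [t1, t2, ewC] at hcl1
    exact hcl1
  -- split claim 2
  have hcl2' : (∫ x in Ioo 0 R ×ˢ Ioo (-a) a, pr u x.1 x.2 * pz (pz (pr u)) x.1 x.2 * x.1)
      + (∫ x in Ioo 0 R ×ˢ Ioo (-a) a, pz (pr u) x.1 x.2 ^ 2 * x.1) = 0 := by
    have t : (∫ x in Ioo 0 R ×ˢ Ioo (-a) a,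
          (pr u x.1 x.2 * pz (pz (pr u)) x.1 x.2 * x.1 + pz (pr u) x.1 x.2 ^ 2 * x.1))
        = (∫ x in Ioo 0 R ×ˢ Ioo (-a) a, pr u x.1 x.2 * pz (pz (pr u)) x.1 x.2 * x.1)
          + ∫ x in Ioo 0 R ×ˢ Ioo (-a) a, pz (pr u) x.1 x.2 ^ 2 * x.1 :=
      integral_add iwzzw izw
    rw [t] at hcl2
    exact hcl2
  -- the 2*AC term
  have hACval : (∫ x in Ioo 0 R ×ˢ Ioo (-a) a,
      2 * (pr (pr u) x.1 x.2 * pz (pz u) x.1 x.2 * x.1))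
      = 2 * ((∫ x in Ioo 0 R ×ˢ Ioo (-a) a, pz (pr u) x.1 x.2 ^ 2 * x.1)
          - (∫ z in Ioo (-a) a, pz u 0 z ^ 2) / 2) := by
    rw [integral_const_mul]
    have h1' : (∫ x in Ioo 0 R ×ˢ Ioo (-a) a, pr (pr u) x.1 x.2 * pz (pz u) x.1 x.2 * x.1)
        = (∫ x in Ioo 0 R ×ˢ Ioo (-a) a, pz (pr u) x.1 x.2 ^ 2 * x.1)
          - (∫ z in Ioo (-a) a, pz u 0 z ^ 2) / 2 := by
      rw [hT3] at hcl1'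
      linarith
    rw [h1']
  -- nonnegativity
  have hn1 : 0 ≤ ∫ x in Ioo 0 R ×ˢ Ioo (-a) a, pz (pr u) x.1 x.2 ^ 2 * x.1 := by
    apply setIntegral_nonneg hSmeas
    intro x hx
    exact mul_nonneg (sq_nonneg _) hx.1.1.le
  have hn2 : 0 ≤ ∫ x in Ioo 0 R ×ˢ Ioo (-a) a,
      (-g x.1 x.2 - pr (pr u) x.1 x.2 - pz (pz u) x.1 x.2) ^ 2 * x.1 := by
    apply setIntegral_nonneg hSmeas
    intro x hx
    exact mul_nonneg (sq_nonneg _) hx.1.1.le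
  have hn3 : 0 ≤ ∫ z in Ioo (-a) a, pz u 0 z ^ 2 :=
    setIntegral_nonneg measurableSet_Ioo fun z _ => sq_nonneg _
  have hn4 : 0 ≤ ∫ z in Ioo (-a) a, pr u R z ^ 2 :=
    setIntegral_nonneg measurableSet_Ioo fun z _ => sq_nonneg _
  rw [hsplitL, hsplitR, hBval, hACval]
  linarith





theorem cyl_integral_eq {R a : ℝ} (h : ℝ × ℝ → ℝ) :
    ∫ x, h x ∂(cylMeasure R a)
      = ∫ x in Ioo 0 R ×ˢ Ioo (-a) a, h x * x.1 := by
  have hrw : cylMeasure R a = ((volume : Measure (ℝ × ℝ)).restrict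
      (Ioo 0 R ×ˢ Ioo (-a) a)).withDensity fun x => ((x.1.toNNReal : NNReal) : ℝ≥0∞) := rfl
  rw [hrw, integral_withDensity_eq_integral_smul (measurable_fst.real_toNNReal) h]
  apply setIntegral_congr_fun (measurableSet_Ioo.prod measurableSet_Ioo)
  intro x hx
  simp only [NNReal.smul_def, Real.coe_toNNReal _ hx.1.1.le, smul_eq_mul]
  ring

theorem cyl_ae_mem {R a : ℝ} :
    ∀ᵐ x ∂(cylMeasure R a), x ∈ Ioo (0:ℝ) R ×ˢ Ioo (-a) a := by
  rw [cylMeasure, ae_withDensity_iff (measurable_fst.ennreal_ofReal)]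
  exact (ae_restrict_mem (measurableSet_Ioo.prod measurableSet_Ioo)).mono
    fun x hx _ => hx

instance cyl_finite {R a : ℝ} : IsFiniteMeasure (cylMeasure R a) := by
  constructor
  rw [cylMeasure, withDensity_apply _ MeasurableSet.univ, setLIntegral_univ]
  calc ∫⁻ x, ENNReal.ofReal x.1 ∂(volume.restrict (Ioo 0 R ×ˢ Ioo (-a) a))
      ≤ ∫⁻ _, ENNReal.ofReal R ∂(volume.restrict (Ioo 0 R ×ˢ Ioo (-a) a)) := by
        apply lintegral_mono_ae
        exact (ae_restrict_mem (measurableSet_Ioo.prod measurableSet_Ioo)).mono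
          fun x hx => ENNReal.ofReal_le_ofReal hx.1.2.le
    _ = ENNReal.ofReal R * volume (Ioo 0 R ×ˢ Ioo (-a) a) := by
        rw [lintegral_const, Measure.restrict_apply_univ]
    _ < ⊤ := by
        apply ENNReal.mul_lt_top ENNReal.ofReal_lt_top
        apply lt_of_le_of_lt (measure_mono
          (prod_mono Ioo_subset_Icc_self Ioo_subset_Icc_self))
        exact (isCompact_Icc.prod isCompact_Icc).measure_lt_top

theorem spNorm_two_sq {R a : ℝ} {v : ℝ → ℝ → ℝ}
    (hc : Continuous fun x : ℝ × ℝ => v x.1 x.2) :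
    spNorm R a 2 v ^ 2
      = ∫ x in Ioo 0 R ×ˢ Ioo (-a) a, v x.1 x.2 ^ 2 * x.1 := by
  obtain ⟨M, hM⟩ := (isCompact_Icc.prod isCompact_Icc).exists_bound_of_continuousOn
    (s := Icc (0:ℝ) R ×ˢ Icc (-a) a) hc.continuousOn
  have hmem : MemLp (fun x : ℝ × ℝ => v x.1 x.2) 2 (cylMeasure R a) := by
    apply MemLp.of_bound hc.aestronglyMeasurable M
    exact cyl_ae_mem.mono fun x hx => hM x
      ⟨Ioo_subset_Icc_self hx.1, Ioo_subset_Icc_self hx.2⟩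
  have heq : spNorm R a 2 v
      = (∫ x : ℝ × ℝ, ‖v x.1 x.2‖ ^ (2:ℝ) ∂(cylMeasure R a)) ^ ((2:ℝ))⁻¹ := by
    rw [spNorm, hmem.eLpNorm_eq_integral_rpow_norm (by norm_num) (by norm_num)]
    rw [ENNReal.toReal_ofReal (by positivity)]
    norm_num
  rw [heq]
  have hnn : 0 ≤ ∫ x : ℝ × ℝ, ‖v x.1 x.2‖ ^ (2:ℝ) ∂(cylMeasure R a) :=
    integral_nonneg fun x => by positivity
  rw [← Real.rpow_natCast ((∫ x : ℝ × ℝ, ‖v x.1 x.2‖ ^ (2:ℝ) ∂(cylMeasure R a)) ^ ((2:ℝ))⁻¹) 2,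
    ← Real.rpow_mul hnn]
  norm_num
  exact cyl_integral_eq _


end H3Aux

/-- Lemma 4.2, estimate (4.8): second `H³` elliptic estimate for
the modified stream function `ψ₁`. -/
theorem H3_elliptic_estimate_psi1_second :
    ∃ c : ℝ, 0 < c ∧
      ∀ (R a : ℝ), 0 < R → 0 < a → ∀ (ψ₁ Γ : ℝ → ℝ → ℝ),
        (ContDiff ℝ (⊤ : ℕ∞) fun x : ℝ × ℝ => ψ₁ x.1 x.2) →
        (ContDiff ℝ (⊤ : ℕ∞) fun x : ℝ × ℝ => Γ x.1 x.2) →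
        (∀ r z, r ∈ Ioo 0 R → z ∈ Ioo (-a) a →
          -(pr (pr ψ₁) r z + 1 / r * pr ψ₁ r z + pz (pz ψ₁) r z) - 2 / r * pr ψ₁ r z = Γ r z) →
        (∀ z, z ∈ Icc (-a) a → ψ₁ R z = 0) →
        (∀ r, r ∈ Icc 0 R → ψ₁ r a = 0 ∧ ψ₁ r (-a) = 0) →
        (∀ z, z ∈ Icc (-a) a → pr ψ₁ 0 z = 0) →
        (∀ r, r ∈ Ico 0 R → Γ r a = 0 ∧ Γ r (-a) = 0) →
        (∀ r, r ∈ Ico 0 R → pz (pz ψ₁) r a = 0 ∧ pz (pz ψ₁) r (-a) = 0) →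
        (∀ z, z ∈ Icc (-a) a → pz (pr ψ₁) 0 z = 0) →
        (∀ z, z ∈ Icc (-a) a → pr (pz (pz ψ₁)) 0 z = 0) →
        (∫ x, (pz (pr (pr ψ₁)) x.1 x.2 ^ 2 + pz (pz (pr ψ₁)) x.1 x.2 ^ 2
              + pz (pz (pz ψ₁)) x.1 x.2 ^ 2) ∂(cylMeasure R a))
          + (∫ z in Ioo (-a) a, pz (pz ψ₁) 0 z ^ 2)
          + (∫ z in Ioo (-a) a, pz (pr ψ₁) R z ^ 2)
          ≤ c * spNorm R a 2 (pz Γ) ^ 2 := by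
  refine ⟨1, one_pos, ?_⟩
  intro R a hR ha ψ₁ Γ hψ hΓ hEq hbR _hbz hpr0 _hΓb hzzb hzpr0 _hprzz0
  rw [one_mul]
  have hprψ : ContDiff ℝ (⊤ : ℕ∞) (H3Aux.F2 (pr ψ₁)) := H3Aux.contDiff_pr hψ
  have hu : ContDiff ℝ (⊤ : ℕ∞) (H3Aux.F2 (pz ψ₁)) := H3Aux.contDiff_pz hψ
  have hg : ContDiff ℝ (⊤ : ℕ∞) (H3Aux.F2 (pz Γ)) := H3Aux.contDiff_pz hΓ
  have e1 : pz (pr ψ₁) = pr (pz ψ₁) := by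
    funext r z; exact H3Aux.pz_pr_comm hψ r z
  have e2 : pz (pr (pr ψ₁)) = pr (pr (pz ψ₁)) := by
    funext r z
    rw [H3Aux.pz_pr_comm hprψ r z, e1]
  rw [H3Aux.spNorm_two_sq (R := R) (a := a) hg.continuous]
  rw [H3Aux.cyl_integral_eq]
  rw [e2, e1]
  have kh1 : ∀ z ∈ Ioo (-a) a, pr (pz ψ₁) 0 z = 0 := by
    intro z hz
    rw [← e1]
    exact hzpr0 z (Ioo_subset_Icc_self hz)
  have kh2a : ∀ r ∈ Ioo 0 R, pz (pz ψ₁) r a = 0 := fun r hr =>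
    (hzzb r ⟨hr.1.le, hr.2⟩).1
  have kh2b : ∀ r ∈ Ioo 0 R, pz (pz ψ₁) r (-a) = 0 := fun r hr =>
    (hzzb r ⟨hr.1.le, hr.2⟩).2
  have kh3 : ∀ z ∈ Ioo (-a) a, pz ψ₁ R z = 0 := by
    intro z hz
    exact H3Aux.deriv_eq_zero_of_eqOn isOpen_Ioo
      (fun y hy => hbR y (Ioo_subset_Icc_self hy)) hz
  have khPDE : ∀ r ∈ Ioo 0 R, ∀ z ∈ Ioo (-a) a,
      3 * pr (pz ψ₁) r z
        = r * (-pz Γ r z - pr (pr (pz ψ₁)) r z - pz (pz (pz ψ₁)) r z) := by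
    intro r hr z hz
    have hr0 : (r : ℝ) ≠ 0 := ne_of_gt hr.1
    have heq : (fun y => Γ r y) =ᶠ[nhds z]
        (fun y => -(pr (pr ψ₁) r y + 1 / r * pr ψ₁ r y + pz (pz ψ₁) r y)
          - 2 / r * pr ψ₁ r y) :=
      Filter.eventuallyEq_of_mem (isOpen_Ioo.mem_nhds hz)
        (fun y hy => (hEq r y hr hy).symm)
    have hD : HasDerivAt (fun y => -(pr (pr ψ₁) r y + 1 / r * pr ψ₁ r y
          + pz (pz ψ₁) r y) - 2 / r * pr ψ₁ r y)
        (-(pz (pr (pr ψ₁)) r z + 1 / r * pz (pr ψ₁) r z + pz (pz (pz ψ₁)) r z)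
          - 2 / r * pz (pr ψ₁) r z) z := by
      have d1 := H3Aux.hasDerivAt_pz (H3Aux.contDiff_pr hprψ) r z
      have d2 := H3Aux.hasDerivAt_pz hprψ r z
      have d3 := H3Aux.hasDerivAt_pz (H3Aux.contDiff_pz hu) r z
      exact (((d1.add (d2.const_mul (1 / r))).add d3).neg).sub (d2.const_mul (2 / r))
    have hΓz : pz Γ r z = -(pz (pr (pr ψ₁)) r z + 1 / r * pz (pr ψ₁) r z
        + pz (pz (pz ψ₁)) r z) - 2 / r * pz (pr ψ₁) r z := by
      have hde := heq.deriv_eq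
      exact hde.trans hD.deriv
    rw [e2, e1] at hΓz
    rw [hΓz]
    field_simp
    ring
  exact H3Aux.key hR ha hu hg kh1 kh2a kh2b kh3 khPDE


end
end
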